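/- arXiv:math/0101054 — 6 statements merged into one kernel-verified Lean document; each statement's English description precedes it below -/
import Mathlib

section
/- Let p > 1 and a > 1 be natural numbers, let α be a finite set of cardinality p·a, and let P be a partition of α of type p^a (exactly a blocks, each of cardinality p). Then the stabilizer H of P in the symmetric group Perm α (a subgroup isomorphic to the wreath product Sym_p ≀ Sym_a) is a maximal subgroup of Perm α: H ≠ Perm α, and every subgroup K with H ≤ K ≤ Perm α satisfies K = H or K = Perm α. -/
/-- The (setwise) stabilizer of a family `P` of subsets of `α` in the symmetric
group of `α`: all permutations mapping each block of `P` to a block of `P`.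
(When `P` is a partition of a finite `α` this set is a subgroup.) -/
def partitionStab {α : Type*} (P : Set (Set α)) : Set (Equiv.Perm α) :=
  {g | ∀ B ∈ P, (⇑g) '' B ∈ P}

section Aux

variable {α : Type*}

/-- Uniqueness of blocks in a pairwise disjoint family. -/
lemma PSM.block_unique {P : Set (Set α)} (hdisj : P.PairwiseDisjoint id)
    {B C : Set α} (hB : B ∈ P) (hC : C ∈ P) {x : α} (hxB : x ∈ B) (hxC : x ∈ C) :
    B = C := by
  by_contra hne
  exact Set.disjoint_left.mp (hdisj hB hC hne) hxB hxC

lemma PSM.perm_image_self (f : Equiv.Perm α) {B : Set α}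
    (h : ∀ z ∈ B, f z ∈ B) (h' : ∀ z ∈ B, f.symm z ∈ B) : (⇑f) '' B = B := by
  apply subset_antisymm
  · rintro _ ⟨w, hw, rfl⟩; exact h w hw
  · intro z hz; exact ⟨f.symm z, h' z hz, f.apply_symm_apply z⟩

/-- A swap of two elements of a single block stabilizes the partition. -/
lemma PSM.swap_mem_partitionStab [DecidableEq α] {P : Set (Set α)}
    (hdisj : P.PairwiseDisjoint id) {B : Set α} (hB : B ∈ P) {x y : α}
    (hx : x ∈ B) (hy : y ∈ B) : Equiv.swap x y ∈ partitionStab P := by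
  intro C hC
  have hfix : ∀ z ∈ C, Equiv.swap x y z ∈ C := by
    intro z hz
    by_cases hBC : B = C
    · subst hBC
      rw [Equiv.swap_apply_def]
      split_ifs <;> assumption
    · have hxC : x ∉ C := fun h => hBC (PSM.block_unique hdisj hB hC hx h)
      have hyC : y ∉ C := fun h => hBC (PSM.block_unique hdisj hB hC hy h)
      rw [Equiv.swap_apply_of_ne_of_ne (fun h => hxC (by rw [← h]; exact hz))
        (fun h => hyC (by rw [← h]; exact hz))]
      exact hz
  have : (⇑(Equiv.swap x y)) '' C = C := by
    apply PSM.perm_image_self _ hfix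
    rw [Equiv.symm_swap]
    exact hfix
  rw [this]; exact hC

open scoped Classical in
/-- The underlying function of the permutation exchanging two disjoint sets via `e`. -/
noncomputable def PSM.bswapFun (C D : Set α) (e : C ≃ D) (x : α) : α :=
  if h : x ∈ C then (e ⟨x, h⟩ : α) else if h : x ∈ D then (e.symm ⟨x, h⟩ : α) else x

namespace PSM

variable {C D : Set α}

lemma bswapFun_of_mem_left (e : C ≃ D) {x : α} (h : x ∈ C) :
    bswapFun C D e x = e ⟨x, h⟩ := by
  unfold bswapFun; rw [dif_pos h]

lemma bswapFun_of_mem_right (hCD : Disjoint C D) (e : C ≃ D) {x : α} (h : x ∈ D) :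
    bswapFun C D e x = e.symm ⟨x, h⟩ := by
  unfold bswapFun
  rw [dif_neg (fun hC => Set.disjoint_left.mp hCD hC h), dif_pos h]

lemma bswapFun_of_not_mem (e : C ≃ D) {x : α} (h1 : x ∉ C) (h2 : x ∉ D) :
    bswapFun C D e x = x := by
  unfold bswapFun; rw [dif_neg h1, dif_neg h2]

lemma bswapFun_invol (hCD : Disjoint C D) (e : C ≃ D) :
    Function.Involutive (bswapFun C D e) := by
  intro x
  by_cases h1 : x ∈ C
  · rw [bswapFun_of_mem_left e h1, bswapFun_of_mem_right hCD e (e ⟨x, h1⟩).2]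
    simp
  · by_cases h2 : x ∈ D
    · rw [bswapFun_of_mem_right hCD e h2, bswapFun_of_mem_left e (e.symm ⟨x, h2⟩).2]
      simp
    · rw [bswapFun_of_not_mem e h1 h2, bswapFun_of_not_mem e h1 h2]

/-- The permutation exchanging two disjoint sets via `e`, fixing everything else. -/
noncomputable def blockSwap (hCD : Disjoint C D) (e : C ≃ D) : Equiv.Perm α :=
  Function.Involutive.toPerm _ (bswapFun_invol hCD e)

lemma blockSwap_apply (hCD : Disjoint C D) (e : C ≃ D) (x : α) :
    blockSwap hCD e x = bswapFun C D e x := rfl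

lemma blockSwap_image_left (hCD : Disjoint C D) (e : C ≃ D) :
    (⇑(blockSwap hCD e)) '' C = D := by
  apply subset_antisymm
  · rintro _ ⟨w, hw, rfl⟩
    rw [blockSwap_apply, bswapFun_of_mem_left e hw]
    exact (e ⟨w, hw⟩).2
  · intro d hd
    refine ⟨e.symm ⟨d, hd⟩, (e.symm ⟨d, hd⟩).2, ?_⟩
    rw [blockSwap_apply, bswapFun_of_mem_left e (e.symm ⟨d, hd⟩).2]
    simp

lemma blockSwap_image_right (hCD : Disjoint C D) (e : C ≃ D) :
    (⇑(blockSwap hCD e)) '' D = C := by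
  apply subset_antisymm
  · rintro _ ⟨w, hw, rfl⟩
    rw [blockSwap_apply, bswapFun_of_mem_right hCD e hw]
    exact (e.symm ⟨w, hw⟩).2
  · intro c hc
    refine ⟨e ⟨c, hc⟩, (e ⟨c, hc⟩).2, ?_⟩
    rw [blockSwap_apply, bswapFun_of_mem_right hCD e (e ⟨c, hc⟩).2]
    simp

lemma blockSwap_mem_partitionStab (hCD : Disjoint C D) (e : C ≃ D)
    {P : Set (Set α)} (hdisj : P.PairwiseDisjoint id)
    (hC : C ∈ P) (hD : D ∈ P) : blockSwap hCD e ∈ partitionStab P := by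
  intro B hB
  by_cases h1 : B = C
  · subst h1; rw [blockSwap_image_left]; exact hD
  · by_cases h2 : B = D
    · subst h2; rw [blockSwap_image_right]; exact hC
    · have hBC := Set.disjoint_left.mp (hdisj hB hC h1)
      have hBD := Set.disjoint_left.mp (hdisj hB hD h2)
      have : (⇑(blockSwap hCD e)) '' B = B := by
        apply subset_antisymm
        · rintro _ ⟨w, hw, rfl⟩
          rw [blockSwap_apply, bswapFun_of_not_mem e (hBC hw) (hBD hw)]
          exact hw
        · intro z hz
          exact ⟨z, hz, by rw [blockSwap_apply, bswapFun_of_not_mem e (hBC hz) (hBD hz)]⟩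
      rw [this]; exact hB

end PSM

end Aux

/-- If `P` is a partition of a finite set of cardinality `p · a` (with
`p, a > 1`) into `a` blocks of size `p`, then its stabilizer `H` in the
symmetric group (isomorphic to `Sym_p ≀ Sym_a`) is a maximal subgroup: `H` is
proper, and any subgroup `K` containing `H` equals `H` or the whole group. -/
theorem partition_stabilizer_maximal
    (p a : ℕ) (hp : 1 < p) (ha : 1 < a) (α : Type*) [Fintype α]
    (hcard : Fintype.card α = p * a) (P : Set (Set α))
    (hne : ∀ B ∈ P, B.Nonempty)
    (hdisj : P.PairwiseDisjoint id)
    (hcover : ⋃₀ P = (Set.univ : Set α))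
    (hblocks : ∀ B ∈ P, B.ncard = p)
    (hnum : P.ncard = a) :
    partitionStab P ≠ (Set.univ : Set (Equiv.Perm α)) ∧
      ∀ K : Subgroup (Equiv.Perm α), partitionStab P ⊆ ↑K →
        ((↑K : Set (Equiv.Perm α)) = partitionStab P ∨ K = ⊤) := by
  classical
  -- the block containing a given point
  have hbl : ∀ x : α, ∃ B, B ∈ P ∧ x ∈ B := by
    intro x
    have : x ∈ ⋃₀ P := by rw [hcover]; trivial
    simpa [Set.mem_sUnion] using this
  choose Bl hBlP hBl using hbl
  have huniq : ∀ (B : Set α), B ∈ P → ∀ x, x ∈ B → B = Bl x :=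
    fun B hB x hx => PSM.block_unique hdisj hB (hBlP x) hx (hBl x)
  have hnotin : ∀ (B : Set α), B ∈ P → ∀ u : α, Bl u ≠ B → u ∉ B :=
    fun B hB u hune hu => hune ((huniq B hB u hu).symm)
  -- an equiv between any two blocks matching prescribed points
  have hequiv : ∀ (B C : Set α), B ∈ P → C ∈ P → ∀ v z (hv : v ∈ B) (hz : z ∈ C),
      ∃ e : B ≃ C, (e ⟨v, hv⟩ : α) = z := by
    intro B C hB hC v z hv hz
    have h1 : Nat.card B = Nat.card C := by
      rw [Nat.card_coe_set_eq, Nat.card_coe_set_eq, hblocks B hB, hblocks C hC]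
    obtain ⟨e0⟩ := Finite.card_eq.mp h1
    refine ⟨e0.trans (Equiv.swap (e0 ⟨v, hv⟩) ⟨z, hz⟩), ?_⟩
    rw [Equiv.trans_apply, Equiv.swap_apply_left]
  -- conjugating a swap in K by an element of K
  have hconj : ∀ (K : Subgroup (Equiv.Perm α)) (g : Equiv.Perm α), g ∈ K →
      ∀ u v : α, Equiv.swap u v ∈ K → Equiv.swap (g u) (g v) ∈ K := by
    intro K g hg u v huv
    rw [Equiv.swap_apply_apply]
    exact K.mul_mem (K.mul_mem hg huv) (K.inv_mem hg)
  constructor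
  · -- properness: a cross-block swap is not in the stabilizer
    have hPfin : P.Finite := Set.toFinite P
    have h2P : 1 < P.ncard := hnum ▸ ha
    obtain ⟨B1, B2, hB1, hB2, hB12⟩ := (Set.one_lt_ncard_iff hPfin).mp h2P
    obtain ⟨x, hx⟩ := hne B1 hB1
    obtain ⟨y, hy⟩ := hne B2 hB2
    have hyB1 : y ∉ B1 := fun h => hB12 (PSM.block_unique hdisj hB1 hB2 h hy)
    have h2B1 : 1 < B1.ncard := (hblocks B1 hB1) ▸ hp
    obtain ⟨b, hb, hbx⟩ := Set.exists_ne_of_one_lt_ncard h2B1 x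
    intro hstab
    have hmem : Equiv.swap x y ∈ partitionStab P := by rw [hstab]; trivial
    have him : (⇑(Equiv.swap x y)) '' B1 ∈ P := hmem B1 hB1
    have hyim : y ∈ (⇑(Equiv.swap x y)) '' B1 := ⟨x, hx, Equiv.swap_apply_left x y⟩
    have hbim : b ∈ (⇑(Equiv.swap x y)) '' B1 :=
      ⟨b, hb, Equiv.swap_apply_of_ne_of_ne hbx (fun h => hyB1 (by rw [← h]; exact hb))⟩
    have h1 : (⇑(Equiv.swap x y)) '' B1 = B1 :=
      (PSM.block_unique hdisj him hB1 hbim hb)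
    rw [h1] at hyim
    exact hyB1 hyim
  · -- maximality
    intro K hHK
    by_cases hK : ∀ g ∈ K, g ∈ partitionStab P
    · exact Or.inl (subset_antisymm (fun g hg => hK g hg) hHK)
    right
    push_neg at hK
    obtain ⟨k, hkK, hk⟩ := hK
    simp only [partitionStab, Set.mem_setOf_eq, not_forall] at hk
    obtain ⟨C0, hC0, hD⟩ := hk
    -- in-block swaps are in K
    have hinb : ∀ (B : Set α), B ∈ P → ∀ x y : α, x ∈ B → y ∈ B → Equiv.swap x y ∈ K :=
      fun B hB x y hx hy => hHK (PSM.swap_mem_partitionStab hdisj hB hx hy)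
    -- Lemma A: from a cross swap, extend the second point anywhere outside `Bl u`
    have hA : ∀ u v : α, Bl u ≠ Bl v → Equiv.swap u v ∈ K →
        ∀ z : α, z ∉ Bl u → Equiv.swap u z ∈ K := by
      intro u v huv hsw z hz
      have huBv : u ∉ Bl v := hnotin (Bl v) (hBlP v) u huv
      by_cases hzv : z ∈ Bl v
      · have hg : Equiv.swap v z ∈ partitionStab P :=
          PSM.swap_mem_partitionStab hdisj (hBlP v) (hBl v) hzv
        have := hconj K _ (hHK hg) u v hsw
        rwa [Equiv.swap_apply_of_ne_of_ne (fun h => huBv (by rw [h]; exact hBl v))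
          (fun h => huBv (by rw [h]; exact hzv)), Equiv.swap_apply_left] at this
      · have hvz : Bl v ≠ Bl z := fun h => hzv (show z ∈ Bl v by rw [h]; exact hBl z)
        have hdis : Disjoint (Bl v) (Bl z) := hdisj (hBlP v) (hBlP z) hvz
        obtain ⟨e, he⟩ := hequiv (Bl v) (Bl z) (hBlP v) (hBlP z) v z (hBl v) (hBl z)
        have hg : PSM.blockSwap hdis e ∈ partitionStab P :=
          PSM.blockSwap_mem_partitionStab hdis e hdisj (hBlP v) (hBlP z)
        have := hconj K _ (hHK hg) u v hsw
        have hgu : PSM.blockSwap hdis e u = u := by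
          rw [PSM.blockSwap_apply, PSM.bswapFun_of_not_mem e huBv
            (hnotin (Bl z) (hBlP z) u
              (fun h => hz (show z ∈ Bl u by rw [h]; exact hBl z)))]
        have hgv : PSM.blockSwap hdis e v = z := by
          rw [PSM.blockSwap_apply, PSM.bswapFun_of_mem_left e (hBl v), he]
        rwa [hgu, hgv] at this
    -- from one cross swap, get all cross swaps
    have hcross : ∀ u v : α, Bl u ≠ Bl v → Equiv.swap u v ∈ K →
        ∀ w z : α, Bl w ≠ Bl z → Equiv.swap w z ∈ K := by
      intro u v huv hsw w z hwz
      by_cases hzu : z ∈ Bl u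
      · have hzEq : Bl u = Bl z := huniq (Bl u) (hBlP u) z hzu
        have hwBu : w ∉ Bl u := fun h =>
          hwz (((huniq (Bl u) (hBlP u) w h).symm).trans hzEq)
        have h1 : Equiv.swap u w ∈ K := hA u v huv hsw w hwBu
        have huw : Bl u ≠ Bl w := fun h => hwBu (show w ∈ Bl u by rw [h]; exact hBl w)
        have h2 : Equiv.swap w u ∈ K := by rwa [Equiv.swap_comm] at h1
        have hzBw : z ∉ Bl w := fun h => hwz (huniq (Bl w) (hBlP w) z h)
        exact hA w u huw.symm h2 z hzBw
      · have h1 : Equiv.swap u z ∈ K := hA u v huv hsw z hzu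
        have huz : Bl u ≠ Bl z := fun h => hzu (show z ∈ Bl u by rw [h]; exact hBl z)
        have h2 : Equiv.swap z u ∈ K := by rwa [Equiv.swap_comm] at h1
        have hwBz : w ∉ Bl z := hnotin (Bl z) (hBlP z) w hwz
        have h3 : Equiv.swap z w ∈ K := hA z u huz.symm h2 w hwBz
        rwa [Equiv.swap_comm] at h3
    -- initial cross swap from k
    have hinit : ∃ u v : α, Bl u ≠ Bl v ∧ Equiv.swap u v ∈ K := by
      obtain ⟨x0, hx0⟩ := hne C0 hC0
      set u := k x0 with hu
      have hexy : ∃ y ∈ C0, k y ∉ Bl u := by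
        by_contra hcon
        push_neg at hcon
        have hsub : (⇑k) '' C0 ⊆ Bl u := by rintro _ ⟨y, hy, rfl⟩; exact hcon y hy
        have hcardim : (Bl u).ncard ≤ ((⇑k) '' C0).ncard := by
          rw [Set.ncard_image_of_injective _ k.injective, hblocks C0 hC0,
            hblocks (Bl u) (hBlP u)]
        exact hD (by
          rw [Set.eq_of_subset_of_ncard_le hsub hcardim (Set.toFinite _)]
          exact hBlP u)
      obtain ⟨y, hy, hky⟩ := hexy
      refine ⟨k x0, k y, fun h => hky (by rw [show Bl u = Bl (k y) from h]; exact hBl (k y)), ?_⟩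
      exact hconj K k hkK x0 y (hinb C0 hC0 x0 y hx0 hy)
    obtain ⟨u, v, huv, hsw⟩ := hinit
    -- all swaps are in K
    have hallswaps : ∀ σ : Equiv.Perm α, σ.IsSwap → σ ∈ K := by
      rintro σ ⟨w, z, hwz, rfl⟩
      by_cases h : Bl w = Bl z
      · exact hinb (Bl w) (hBlP w) w z (hBl w) (show z ∈ Bl w by rw [h]; exact hBl z)
      · exact hcross u v huv hsw w z h
    rw [eq_top_iff, ← Equiv.Perm.closure_isSwap]
    exact (Subgroup.closure_le K).mpr (fun σ hσ => hallswaps σ hσ)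
end

section
/- Let p > 1, q > 1, r ≥ 1 be natural numbers and let α be a finite set of cardinality n = p·q·r. Let Q = {Q₁, …, Q_r} be a partition of α into r blocks each of cardinality p·q, and let P be a partition of α into q·r blocks each of cardinality p such that every block of P is contained in some block of Q. Let G₀ = {g ∈ Perm α : g(Qᵢ) = Qᵢ for all i} (so G₀ ≅ ∏ᵢ Sym(Qᵢ)), and let H₀ = {h ∈ G₀ : h maps every block of P to a block of P}. Suppose g ∈ G₀ is written as a product g = g₁ ⋯ g_r of permutations with supp(gᵢ) ⊆ Qᵢ for each i, and that gᵢ ∉ H₀ for every i. Then the subgroup generated by H₀ and g equals G₀; equivalently, ⟨H₀, g₁, …, g_r⟩ = G₀. -/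
/-!
Let `K` contain `H₀` and `g`. Since the transpositions inside one block `Qᵢ` generate its
symmetric group, it suffices that `K` contains every such transposition. `H₀` already supplies
the transpositions inside a block of `P` and, for two blocks of `P` in the same `Qᵢ`, an
involution exchanging them. As `gᵢ ∉ H₀` and `g` agrees with `gᵢ` on `Qᵢ`, `g` sends two
points of one block of `P` to different blocks `U ≠ V`, so conjugating gives a transposition
`(u v) ∈ K` joining `U` and `V`. Conjugating it by exchanges links every block of `Qᵢ` to `v`,
and transpositions inside blocks then connect all of `Qᵢ`.
-/

open Equiv Function Set
open scoped Pointwise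

section

variable {α : Type*}

section Swaps

variable [DecidableEq α]

lemma swap_apply_mem_of_mem {K : Subgroup (Perm α)} {h : Perm α} (hh : h ∈ K) {x y : α}
    (hxy : swap x y ∈ K) : swap (h x) (h y) ∈ K := by
  rw [swap_apply_apply]
  exact K.mul_mem (K.mul_mem hh hxy) (K.inv_mem hh)

lemma mem_of_forall_swap_apply_mem [Finite α] {K : Subgroup (Perm α)} {σ : Perm α}
    (h : ∀ x, swap x (σ x) ∈ K) : σ ∈ K := by
  let S : Set (Perm α) := {τ | τ ∈ K ∧ τ.IsSwap}
  have hS : Subgroup.closure S ≤ K := (Subgroup.closure_le K).2 fun τ hτ => hτ.1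
  refine hS ((mem_closure_isSwap fun τ hτ => hτ.2).2 ⟨toFinite _, fun x => ?_⟩)
  by_cases hx : x = σ x
  · rw [← hx]; exact MulAction.mem_orbit_self x
  · exact ⟨⟨swap x (σ x), Subgroup.subset_closure ⟨h x, x, σ x, hx, rfl⟩⟩, swap_apply_left x (σ x)⟩

lemma setOf_swap_apply_ne_subset {a b : α} {s : Set α} (ha : a ∈ s) (hb : b ∈ s) :
    {x | swap a b x ≠ x} ⊆ s := by
  intro x hx
  obtain ⟨-, rfl | rfl⟩ := swap_apply_ne_self_iff.1 hx <;> assumption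

end Swaps

lemma image_eq_self_of_support_subset {σ : Perm α} {B T : Set α} (hσ : {x | σ x ≠ x} ⊆ B)
    (hT : B = T ∨ Disjoint B T) : σ '' T = T := by
  rcases hT with rfl | hBT
  · exact image_perm hσ
  · exact EqOn.image_eq_self fun x hx => not_not.1 fun hne => hBT.notMem_of_mem_right hx (hσ hne)

lemma exists_perm_exchanging [Finite α] {C D : Set α} (hCD : Disjoint C D)
    (hcard : C.ncard = D.ncard) :
    ∃ h : Perm α, h '' C = D ∧ h '' D = C ∧ {x | h x ≠ x} ⊆ C ∪ D := by
  classical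
  obtain ⟨e⟩ : Nonempty (C ≃ D) := by
    rw [← Finite.card_eq, Nat.card_coe_set_eq, Nat.card_coe_set_eq, hcard]
  let f : α → α := fun x =>
    if hx : x ∈ C then e ⟨x, hx⟩ else if hx : x ∈ D then e.symm ⟨x, hx⟩ else x
  have hfC : ∀ x ∈ C, f x ∈ D := fun x hx => by simp [f, hx]
  have hfD : ∀ x ∈ D, f x ∈ C := fun x hx => by simp [f, hx, hCD.notMem_of_mem_right hx]
  have hf : Function.Involutive f := by
    intro x
    by_cases hxC : x ∈ C
    · simp [f, hxC, hCD.notMem_of_mem_right (e ⟨x, hxC⟩).2]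
    · by_cases hxD : x ∈ D <;> simp [f, hxC, hxD]
  refine ⟨hf.toPerm f, ?_, ?_, fun x hx => ?_⟩
  · exact Subset.antisymm (image_subset_iff.2 hfC) fun y hy => ⟨f y, hfD y hy, hf y⟩
  · exact Subset.antisymm (image_subset_iff.2 hfD) fun y hy => ⟨f y, hfC y hy, hf y⟩
  · by_contra hxCD
    simp only [mem_union, not_or] at hxCD
    exact hx (by simp [f, hxCD.1, hxCD.2])

def blockStabilizer {ι : Type*} (Q : ι → Set α) : Subgroup (Perm α) :=
  ⨅ i, MulAction.stabilizer (Perm α) (Q i)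

section Blocks

variable {ι : Type*} {Q : ι → Set α} {P : Set (Set α)}

lemma mem_blockStabilizer {σ : Perm α} : σ ∈ blockStabilizer Q ↔ ∀ i, σ '' Q i = Q i := by
  simp only [blockStabilizer, Subgroup.mem_iInf, MulAction.mem_stabilizer_iff]
  rfl

lemma mem_blockStabilizer_of_support_subset (hQ : Pairwise (Disjoint on Q)) {σ : Perm α} {j : ι}
    (hσ : {x | σ x ≠ x} ⊆ Q j) : σ ∈ blockStabilizer Q :=
  mem_blockStabilizer.2 fun i =>
    image_eq_self_of_support_subset hσ ((eq_or_ne j i).imp (congrArg Q) (@hQ j i))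

lemma subset_block_of_mem (hQ : Pairwise (Disjoint on Q)) {B : Set α} {i j : ι}
    (hB : B ⊆ Q j) {x : α} (hxB : x ∈ B) (hxi : x ∈ Q i) : B ⊆ Q i := by
  obtain rfl : j = i := hQ.eq (not_disjoint_iff.2 ⟨x, hB hxB, hxi⟩)
  exact hB

lemma image_mem_of_support_subset_mem (hP : P.PairwiseDisjoint id) {σ : Perm α} {B : Set α}
    (hB : B ∈ P) (hσ : {x | σ x ≠ x} ⊆ B) : ∀ T ∈ P, σ '' T ∈ P := fun T hT => by
  have hBT : B = T ∨ Disjoint B T := (eq_or_ne B T).imp id (hP hB hT)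
  rwa [image_eq_self_of_support_subset hσ hBT]

lemma image_mem_of_exchanging (hP : P.PairwiseDisjoint id) {σ : Perm α} {C D : Set α}
    (hC : C ∈ P) (hD : D ∈ P) (hCD : σ '' C = D) (hDC : σ '' D = C)
    (hσ : {x | σ x ≠ x} ⊆ C ∪ D) : ∀ T ∈ P, σ '' T ∈ P := by
  intro T hT
  obtain rfl | hTC := eq_or_ne T C
  · rwa [hCD]
  obtain rfl | hTD := eq_or_ne T D
  · rwa [hDC]
  have hCDT : Disjoint (C ∪ D) T := disjoint_union_left.2 ⟨hP hC hT hTC.symm, hP hD hT hTD.symm⟩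
  rwa [image_eq_self_of_support_subset hσ (Or.inr hCDT)]

lemma exists_block_image_notMem (hQ : Pairwise (Disjoint on Q))
    (hrefine : ∀ B ∈ P, ∃ i, B ⊆ Q i) {σ : Perm α} {i : ι} (hσ : {x | σ x ≠ x} ⊆ Q i)
    (hbad : ¬ ∀ B ∈ P, σ '' B ∈ P) : ∃ B ∈ P, B ⊆ Q i ∧ σ '' B ∉ P := by
  push Not at hbad
  obtain ⟨B, hB, hσB⟩ := hbad
  obtain ⟨j, hBj⟩ := hrefine B hB
  obtain rfl | hij := eq_or_ne i j
  · exact ⟨B, hB, hBj, hσB⟩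
  · exact absurd (by rwa [image_eq_self_of_support_subset hσ (Or.inr ((hQ hij).mono_right hBj))])
      hσB

lemma exists_mem_image_mem_ne_of_image_notMem [Finite α] (hPcover : ∀ x, ∃ B ∈ P, x ∈ B)
    {n : ℕ} (hPcard : ∀ B ∈ P, B.ncard = n) {σ : Perm α} {B : Set α} (hB : B ∈ P)
    (hne : B.Nonempty) (hσB : σ '' B ∉ P) :
    ∃ a ∈ B, ∃ b ∈ B, ∃ U ∈ P, ∃ V ∈ P, U ≠ V ∧ σ a ∈ U ∧ σ b ∈ V := by
  obtain ⟨a, ha⟩ := hne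
  obtain ⟨U, hU, haU⟩ := hPcover (σ a)
  obtain ⟨b, hb, hbU⟩ : ∃ b ∈ B, σ b ∉ U := by
    by_contra! hBU
    refine hσB (eq_of_subset_of_ncard_le (image_subset_iff.2 hBU) ?_ (toFinite _) ▸ hU)
    rw [ncard_image_of_injective B σ.injective, hPcard B hB, hPcard U hU]
  obtain ⟨V, hV, hbV⟩ := hPcover (σ b)
  exact ⟨a, ha, b, hb, U, hU, V, hV, fun h => hbU (h ▸ hbV), haU, hbV⟩

end Blocks

section Connectivity

variable [DecidableEq α] {K : Subgroup (Perm α)} {P : Set (Set α)} {Q : Set α}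

lemma exists_swap_mem_of_swap_mem_across (hP : P.PairwiseDisjoint id)
    (hexch : ∀ C ∈ P, ∀ D ∈ P, C ⊆ Q → D ⊆ Q → C ≠ D →
      ∃ h ∈ K, h '' C = D ∧ {x | h x ≠ x} ⊆ C ∪ D)
    {U V : Set α} (hU : U ∈ P) (hV : V ∈ P) (hUQ : U ⊆ Q) (hUV : U ≠ V) {u v : α} (hu : u ∈ U)
    (hv : v ∈ V) (huv : swap u v ∈ K) {C : Set α} (hC : C ∈ P) (hCQ : C ⊆ Q) :
    ∃ c ∈ C, swap c v ∈ K := by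
  obtain rfl | hCV := eq_or_ne C V
  · exact ⟨v, hv, swap_self v ▸ K.one_mem⟩
  obtain rfl | hUC := eq_or_ne U C
  · exact ⟨u, hu, huv⟩
  -- an exchange of `U` and `C` carries `u` into `C` and fixes `v`
  obtain ⟨h, hhK, hUC', hh⟩ := hexch U hU C hC hUQ hCQ hUC
  have hvUC : v ∉ U ∪ C := fun hvUC => by
    rcases hvUC with hvU | hvC
    exacts [hP hU hV hUV |>.notMem_of_mem_right hv hvU,
      hP hC hV hCV |>.notMem_of_mem_right hv hvC]
  have hhv : h v = v := not_not.1 fun hne => hvUC (hh hne)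
  exact ⟨h u, hUC' ▸ mem_image_of_mem h hu, hhv ▸ swap_apply_mem_of_mem hhK huv⟩

lemma swap_mem_of_mem_of_mem (hwithin : ∀ B ∈ P, ∀ a ∈ B, ∀ b ∈ B, swap a b ∈ K)
    (hcover : ∀ a ∈ Q, ∃ B ∈ P, a ∈ B ∧ B ⊆ Q) {v : α}
    (hlink : ∀ C ∈ P, C ⊆ Q → ∃ c ∈ C, swap c v ∈ K) {a b : α} (ha : a ∈ Q) (hb : b ∈ Q) :
    swap a b ∈ K := by
  have hv : ∀ a ∈ Q, swap a v ∈ K := fun a ha => by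
    obtain ⟨B, hB, haB, hBQ⟩ := hcover a ha
    obtain ⟨c, hc, hcv⟩ := hlink B hB hBQ
    exact SubmonoidClass.swap_mem_trans K (hwithin B hB a haB c hc) hcv
  exact SubmonoidClass.swap_mem_trans K (hv a ha) (swap_comm b v ▸ hv b hb)

end Connectivity

lemma list_prod_apply_eq_of_pairwise_disjoint [Finite α] {l : List (Perm α)}
    (hl : l.Pairwise Perm.Disjoint) {f : Perm α} (hf : f ∈ l) {x : α}
    (hx : ∀ σ ∈ l, σ x ≠ x → σ = f) : l.prod x = f x := by
  classical
  have := Fintype.ofFinite α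
  by_cases hfx : f x = x
  · have hfix : l.prod ∈ MulAction.stabilizer (Perm α) x :=
      Subgroup.list_prod_mem _ fun σ hσ => not_not.1 fun hne => hne (hx σ hσ hne ▸ hfx)
    exact hfix.trans hfx.symm
  · exact (Perm.eq_on_support_mem_disjoint hf hl x (Perm.mem_support.2 hfx)).symm

lemma list_ofFn_prod_apply_of_mem [Finite α] {r : ℕ} {Q : Fin r → Set α}
    (hQ : Pairwise (Disjoint on Q)) {gs : Fin r → Perm α} (hsupp : ∀ i, {x | gs i x ≠ x} ⊆ Q i)
    {i : Fin r} {x : α} (hx : x ∈ Q i) : (List.ofFn gs).prod x = gs i x := by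
  refine list_prod_apply_eq_of_pairwise_disjoint ?_ (List.mem_ofFn' gs _ |>.2 ⟨i, rfl⟩) ?_
  · refine List.pairwise_ofFn.2 fun j k hjk y => ?_
    by_contra! hy
    exact (hQ hjk.ne).notMem_of_mem_left (hsupp j hy.1) (hsupp k hy.2)
  · rintro _ hσ hσx
    obtain ⟨j, rfl⟩ := (List.mem_ofFn' gs _).1 hσ
    rw [hQ.eq (not_disjoint_iff.2 ⟨x, hsupp j hσx, hx⟩)]

theorem blockStabilizer_le_of_image_notMem [Finite α] {ι : Type*} {Q : ι → Set α}
    {P : Set (Set α)} {n : ℕ} {K : Subgroup (Perm α)}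
    (hQ : Pairwise (Disjoint on Q)) (hQcover : ∀ x, ∃ i, x ∈ Q i)
    (hPne : ∀ B ∈ P, B.Nonempty) (hP : P.PairwiseDisjoint id) (hPcover : ∀ x, ∃ B ∈ P, x ∈ B)
    (hPcard : ∀ B ∈ P, B.ncard = n) (hrefine : ∀ B ∈ P, ∃ i, B ⊆ Q i)
    (hH : ∀ σ ∈ blockStabilizer Q, (∀ B ∈ P, σ '' B ∈ P) → σ ∈ K)
    {g : Perm α} (hgK : g ∈ K) (hgQ : g ∈ blockStabilizer Q)
    (hbad : ∀ i, ∃ B ∈ P, B ⊆ Q i ∧ g '' B ∉ P) :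
    blockStabilizer Q ≤ K := by
  classical
  have hrefine' : ∀ {i x}, x ∈ Q i → ∀ B ∈ P, x ∈ B → B ⊆ Q i := fun hxi B hB hxB =>
    (hrefine B hB).elim fun _ hBj => subset_block_of_mem hQ hBj hxB hxi
  have hwithin : ∀ B ∈ P, ∀ a ∈ B, ∀ b ∈ B, swap a b ∈ K := fun B hB a ha b hb =>
    have hab := setOf_swap_apply_ne_subset ha hb
    hH _ (mem_blockStabilizer_of_support_subset hQ (hab.trans (hrefine B hB).choose_spec))
      (image_mem_of_support_subset_mem hP hB hab)
  intro σ hσ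
  refine mem_of_forall_swap_apply_mem fun x => ?_
  obtain ⟨i, hx⟩ := hQcover x
  have hexch : ∀ C ∈ P, ∀ D ∈ P, C ⊆ Q i → D ⊆ Q i → C ≠ D →
      ∃ h ∈ K, h '' C = D ∧ {x | h x ≠ x} ⊆ C ∪ D := by
    intro C hC D hD hCQ hDQ hCD
    obtain ⟨h, hCD', hDC', hh⟩ :=
      exists_perm_exchanging (hP hC hD hCD) ((hPcard C hC).trans (hPcard D hD).symm)
    exact ⟨h, hH h (mem_blockStabilizer_of_support_subset hQ (hh.trans (union_subset hCQ hDQ)))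
      (image_mem_of_exchanging hP hC hD hCD' hDC' hh), hCD', hh⟩
  -- `g` splits some block of `Q i`, which conjugates a swap inside a block into one across blocks
  obtain ⟨B, hB, hBQ, hgB⟩ := hbad i
  obtain ⟨a, ha, b, hb, U, hU, V, hV, hUV, hgaU, hgbV⟩ :=
    exists_mem_image_mem_ne_of_image_notMem hPcover hPcard hB (hPne B hB) hgB
  have hga : g a ∈ Q i := mem_blockStabilizer.1 hgQ i ▸ mem_image_of_mem g (hBQ ha)
  have hσx : σ x ∈ Q i := mem_blockStabilizer.1 hσ i ▸ mem_image_of_mem σ hx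
  exact swap_mem_of_mem_of_mem hwithin
    (fun y hy => (hPcover y).imp fun C ⟨hC, hyC⟩ => ⟨hC, hyC, hrefine' hy C hC hyC⟩)
    (fun C hC hCQ => exists_swap_mem_of_swap_mem_across hP hexch hU hV (hrefine' hga U hU hgaU)
      hUV hgaU hgbV (swap_apply_mem_of_mem hgK (hwithin B hB a ha b hb)) hC hCQ) hx hσx

end

theorem subgroup_closure_eq_blockwise_sym_general
    (p r : ℕ)
    (α : Type*) [Fintype α]
    (Qb : Fin r → Set α)
    (hQdisj : ∀ i j : Fin r, i ≠ j → Disjoint (Qb i) (Qb j))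
    (hQcover : (⋃ i, Qb i) = (Set.univ : Set α))
    (P : Set (Set α))
    (hPne : ∀ B ∈ P, B.Nonempty)
    (hPdisj : P.PairwiseDisjoint id)
    (hPcover : ⋃₀ P = (Set.univ : Set α))
    (hPcard : ∀ B ∈ P, B.ncard = p)
    (hrefine : ∀ B ∈ P, ∃ i, B ⊆ Qb i)
    (G₀ H₀ : Set (Equiv.Perm α))
    (hG₀ : G₀ = {σ : Equiv.Perm α | ∀ i, (⇑σ) '' Qb i = Qb i})
    (hH₀ : H₀ = {σ : Equiv.Perm α | σ ∈ G₀ ∧ ∀ B ∈ P, (⇑σ) '' B ∈ P})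
    (g : Equiv.Perm α) (gs : Fin r → Equiv.Perm α)
    (hgG₀ : g ∈ G₀)
    (hprod : g = (List.ofFn gs).prod)
    (hsupp : ∀ i, ∀ x : α, gs i x ≠ x → x ∈ Qb i)
    (hnot : ∀ i, gs i ∉ H₀) :
    ((Subgroup.closure (H₀ ∪ {g}) : Subgroup (Equiv.Perm α)) : Set (Equiv.Perm α)) = G₀ ∧
    ((Subgroup.closure (H₀ ∪ Set.range gs) : Subgroup (Equiv.Perm α)) : Set (Equiv.Perm α)) = G₀ := by
  have hQ : Pairwise (Disjoint on Qb) := fun i j hij => hQdisj i j hij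
  obtain rfl : G₀ = blockStabilizer Qb := by ext σ; rw [hG₀]; exact mem_blockStabilizer.symm
  have hH : ∀ σ, σ ∈ H₀ ↔ σ ∈ blockStabilizer Qb ∧ ∀ B ∈ P, σ '' B ∈ P := by
    subst hH₀; exact fun _ => Iff.rfl
  have hgs : ∀ i, gs i ∈ blockStabilizer Qb :=
    fun i => mem_blockStabilizer_of_support_subset hQ (hsupp i)
  have hbad : ∀ i, ∃ B ∈ P, B ⊆ Qb i ∧ g '' B ∉ P := fun i => by
    obtain ⟨B, hB, hBQ, hgsB⟩ :=
      exists_block_image_notMem hQ hrefine (hsupp i) fun h => hnot i ((hH _).2 ⟨hgs i, h⟩)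
    refine ⟨B, hB, hBQ, ?_⟩
    rwa [hprod, image_congr fun x hx => list_ofFn_prod_apply_of_mem hQ hsupp (hBQ hx)]
  have hclosure : ∀ S : Set (Perm α), S ⊆ blockStabilizer Qb → g ∈ Subgroup.closure (H₀ ∪ S) →
      Subgroup.closure (H₀ ∪ S) = blockStabilizer Qb := fun S hS hg =>
    le_antisymm ((Subgroup.closure_le _).2 (union_subset (fun σ h => ((hH σ).1 h).1) hS))
      (blockStabilizer_le_of_image_notMem hQ (iUnion_eq_univ_iff.1 hQcover) hPne hPdisj
        (sUnion_eq_univ_iff.1 hPcover) hPcard hrefine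
        (fun σ hσ hσP => Subgroup.subset_closure (Or.inl ((hH σ).2 ⟨hσ, hσP⟩))) hg hgG₀ hbad)
  have hg_range : g ∈ Subgroup.closure (H₀ ∪ range gs) := hprod ▸ Subgroup.list_prod_mem _
    fun σ hσ => Subgroup.subset_closure (Or.inr ((List.mem_ofFn' gs σ).1 hσ))
  rw [SetLike.coe_set_eq, SetLike.coe_set_eq]
  exact ⟨hclosure _ (singleton_subset_iff.2 hgG₀) (Subgroup.subset_closure (Or.inr rfl)),
    hclosure _ (range_subset_iff.2 hgs) hg_range⟩

/-- Lemma 2.23: Let `α` have cardinality `n = p·q·r`, let `Q₁, …, Q_r` be a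
partition of `α` into `r` blocks of size `p·q`, and let `P` be a refinement of
it into `q·r` blocks of size `p`.  Let `G₀` be the subgroup of permutations
fixing each block `Qᵢ` setwise and `H₀` the set of elements of `G₀` permuting
the blocks of `P`.  If `g = g₁ ⋯ g_r` with `supp(gᵢ) ⊆ Qᵢ` and `gᵢ ∉ H₀` for
all `i`, then `⟨H₀, g⟩ = ⟨H₀, g₁, …, g_r⟩ = G₀`. -/
theorem subgroup_closure_eq_blockwise_sym
    (p q r : ℕ) (hp : 1 < p) (hq : 1 < q) (hr : 1 ≤ r)
    (α : Type*) [Fintype α] (hcard : Fintype.card α = p * q * r)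
    (Qb : Fin r → Set α)
    (hQdisj : ∀ i j : Fin r, i ≠ j → Disjoint (Qb i) (Qb j))
    (hQcover : (⋃ i, Qb i) = (Set.univ : Set α))
    (hQcard : ∀ i, (Qb i).ncard = p * q)
    (P : Set (Set α))
    (hPne : ∀ B ∈ P, B.Nonempty)
    (hPdisj : P.PairwiseDisjoint id)
    (hPcover : ⋃₀ P = (Set.univ : Set α))
    (hPcard : ∀ B ∈ P, B.ncard = p)
    (hPnum : P.ncard = q * r)
    (hrefine : ∀ B ∈ P, ∃ i, B ⊆ Qb i)
    (G₀ H₀ : Set (Equiv.Perm α))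
    (hG₀ : G₀ = {σ : Equiv.Perm α | ∀ i, (⇑σ) '' Qb i = Qb i})
    (hH₀ : H₀ = {σ : Equiv.Perm α | σ ∈ G₀ ∧ ∀ B ∈ P, (⇑σ) '' B ∈ P})
    (g : Equiv.Perm α) (gs : Fin r → Equiv.Perm α)
    (hgG₀ : g ∈ G₀)
    (hprod : g = (List.ofFn gs).prod)
    (hsupp : ∀ i, ∀ x : α, gs i x ≠ x → x ∈ Qb i)
    (hnot : ∀ i, gs i ∉ H₀) :
    ((Subgroup.closure (H₀ ∪ {g}) : Subgroup (Equiv.Perm α)) : Set (Equiv.Perm α)) = G₀ ∧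
    ((Subgroup.closure (H₀ ∪ Set.range gs) : Subgroup (Equiv.Perm α)) : Set (Equiv.Perm α)) = G₀ :=
  subgroup_closure_eq_blockwise_sym_general p r α Qb hQdisj hQcover P hPne hPdisj hPcover hPcard
    hrefine G₀ H₀ hG₀ hH₀ g gs hgG₀ hprod hsupp hnot
end

section
/- Two subspaces A, B ∈ Σ lie in the same orbit of P (that is, there exists g ∈ P with g(A) = B) if and only if they have the same J-indicator, i.e., dim(A ∩ J) = dim(B ∩ J). -/
/-!
Every `A ∈ Σ` with `dim (A ∩ J) = j` has an adapted hyperbolic basis `e, f` of `W`: the `e`'s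
span `J` and `A = ⟨e₁, …, e_j, f_{j+1}, …, f_{n-1}, e_n + f_n⟩`. To build it, take a basis
`e₁, …, e_j` of `A ∩ J`, singular vectors `u` completing it to a basis of `S_A`, and `a ∈ A`
with `Q a = 1` (a square root exists since `F` is perfect of characteristic 2). Since the polar
pairing between `J` and `K` is perfect, there are vectors of `J` dual to `u, a`, and then
partners in `K` corrected inside `J`. The linear map carrying one adapted basis to another
preserves `Q`, which is determined by its values and polar values on a basis, maps `J` to `J`,
and carries `A` to `B`.
-/

/-- `A` belongs to the collection `Σ`: an `n`-dimensional subspace of `W` on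
which the polar form vanishes identically and whose set of singular vectors is
a linear subspace of codimension `1`. -/
def InSigmaSet {F W : Type*} [Field F] [AddCommGroup W] [Module F W]
    (n : ℕ) (Q : QuadraticForm F W) (A : Submodule F W) : Prop :=
  Module.finrank F A = n ∧
    (∀ x ∈ A, ∀ y ∈ A, QuadraticMap.polar (⇑Q) x y = 0) ∧
    ∃ S : Submodule F W, (S : Set W) = {x : W | x ∈ A ∧ Q x = 0} ∧
      Module.finrank F S + 1 = Module.finrank F A

open QuadraticMap Module Submodule Set

theorem exists_mul_self_eq (F : Type*) [Field F] [PerfectField F] [CharP F 2] (c : F) :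
    ∃ t, t * t = c := by
  obtain ⟨t, ht⟩ := surjective_frobenius F 2 c
  exact ⟨t, by rw [← ht, frobenius_def, _root_.sq]⟩

section LinearAlgebra

variable {K V ι κ : Type*} [Field K] [AddCommGroup V] [Module K V]

theorem LinearIndependent.exists_dual_eq_ite [DecidableEq ι] {v : ι → V}
    (hv : LinearIndependent K v) :
    ∃ ξ : ι → Dual K V, ∀ k l, ξ k (v l) = if k = l then 1 else 0 := by
  choose ξ hξ using fun k => LinearMap.exists_extend ((Basis.span hv).coord k)
  refine ⟨ξ, fun k l => ?_⟩
  have := LinearMap.congr_fun (hξ k) ⟨v l, subset_span (mem_range_self l)⟩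
  simp only [LinearMap.comp_apply, Submodule.subtype_apply] at this
  rw [this, ← Basis.span_apply hv l, Basis.coord_apply, Basis.repr_self,
    Finsupp.single_eq_pi_single, Pi.single_apply]

theorem linearIndependent_of_eq_ite [DecidableEq ι] (B : V →ₗ[K] V →ₗ[K] K) {x y : ι → V}
    (hxy : ∀ k l, B (x k) (y l) = if k = l then 1 else 0) :
    LinearIndependent K x := by
  rw [linearIndependent_iff']
  intro s c hc i hi
  simpa [hxy, hi] using congrArg (fun z => B z (y i)) hc

theorem linearIndependent_sumElim_of_eq_ite [Fintype ι] [Fintype κ] [DecidableEq κ]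
    (B : V →ₗ[K] V →ₗ[K] K) {x : ι → V} {y z : κ → V} (hx : LinearIndependent K x)
    (hxz : ∀ i l, B (x i) (z l) = 0) (hyz : ∀ k l, B (y k) (z l) = if k = l then 1 else 0) :
    LinearIndependent K (Sum.elim x y) := by
  rw [Fintype.linearIndependent_iff] at hx ⊢
  intro c hc
  have hcy : ∀ l, c (.inr l) = 0 := fun l => by
    simpa [Fintype.sum_sum_type, hxz, hyz] using congrArg (fun w => B w (z l)) hc
  have hcx := hx (c ∘ .inl) (by simpa [Fintype.sum_sum_type, hcy] using hc)
  rintro (i | l)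
  exacts [hcx i, hcy l]

theorem Submodule.exists_span_range_eq {P : Submodule K V} {k : ℕ} [FiniteDimensional K P]
    (hk : finrank K P = k) : ∃ x : Fin k → V, span K (range x) = P := by
  let b := finBasisOfFinrankEq K P hk
  refine ⟨P.subtype ∘ b, ?_⟩
  rw [range_comp, ← map_span, b.span_eq, map_subtype_top]

theorem Submodule.sup_span_singleton_eq_of_finrank_add_one {S A : Submodule K V}
    [FiniteDimensional K A] (hSA : S ≤ A) (hdim : finrank K S + 1 = finrank K A) {a : V}
    (haA : a ∈ A) (haS : a ∉ S) : S ⊔ span K {a} = A := by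
  have hlt : S < S ⊔ span K {a} := left_lt_sup.2 fun h => haS (h (mem_span_singleton_self a))
  have hle : S ⊔ span K {a} ≤ A := sup_le hSA ((span_singleton_le_iff_mem a A).2 haA)
  have : FiniteDimensional K (S ⊔ span K {a} : Submodule K V) := finiteDimensional_of_le hle
  have := finrank_lt_finrank_of_lt hlt
  exact eq_of_le_of_finrank_le hle (by omega)

end LinearAlgebra

namespace QuadraticMap

variable {R M N : Type*} [CommRing R] [AddCommGroup M] [Module R M] [AddCommGroup N]
  [Module R N] (Q : QuadraticMap R M N)

theorem polar_sum_left (x : M) {ι : Type*} (s : Finset ι) (y : ι → M) :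
    polar Q (∑ l ∈ s, y l) x = ∑ l ∈ s, polar Q (y l) x := by
  simp only [← polarBilin_apply_apply, map_sum, LinearMap.sum_apply]

theorem apply_eq_of_basis {ι : Type*} [Fintype ι] (g : M →ₗ[R] M) (b : Basis ι R M)
    (hQ : ∀ k, Q (g (b k)) = Q (b k))
    (hpolar : ∀ k l, polar Q (g (b k)) (g (b l)) = polar Q (b k) (b l)) (x : M) :
    Q (g x) = Q x := by
  rw [← b.sum_repr x, map_sum]
  simp_rw [map_smul]
  rw [Q.map_sum', Q.map_sum']
  congr 1
  · refine Finset.sum_congr rfl fun p _ => ?_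
    induction p using Sym2.ind with
    | _ k l => simp [polarSym2_sym2Mk, polar_smul_left, polar_smul_right, hpolar]
  · simp [QuadraticMap.map_smul, hQ]

end QuadraticMap

section QuadraticSpace

variable {F W : Type*} [Field F] [AddCommGroup W] [Module F W] {Q : QuadraticForm F W}

theorem polar_eq_zero_of_mem {L : Submodule F W} (hQL : ∀ x ∈ L, Q x = 0) {x y : W}
    (hx : x ∈ L) (hy : y ∈ L) : polar Q x y = 0 := by
  simp [polar, hQL _ hx, hQL _ hy, hQL _ (L.add_mem hx hy)]

section Complement

variable [FiniteDimensional F W] {L M : Submodule F W}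

theorem surjective_polarBilin_domRestrict₁₂ (hnd : Q.polarBilin.SeparatingLeft)
    (hLM : IsCompl L M) (hQL : ∀ x ∈ L, Q x = 0) (hdim : finrank F L = finrank F M) :
    Function.Surjective (Q.polarBilin.domRestrict₁₂ L M) := by
  refine (LinearMap.injective_iff_surjective_of_finrank_eq_finrank
    (hdim.trans Subspace.dual_finrank_eq.symm)).1 fun x y hxy => ?_
  rw [← sub_eq_zero, ← map_sub] at hxy
  rw [← sub_eq_zero]
  refine Subtype.ext (hnd _ fun z => ?_)
  obtain ⟨l, hl, m, hm, rfl⟩ := mem_sup.1 (hLM.sup_eq_top ▸ mem_top : z ∈ L ⊔ M)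
  have hm0 := LinearMap.congr_fun hxy ⟨m, hm⟩
  simp only [LinearMap.domRestrict₁₂_apply, LinearMap.zero_apply] at hm0
  rw [map_add, hm0, add_zero, polarBilin_apply_apply]
  exact polar_eq_zero_of_mem hQL (x - y).2 hl

theorem exists_polar_eq_ite_of_disjoint (hnd : Q.polarBilin.SeparatingLeft)
    (hLM : IsCompl L M) (hQL : ∀ x ∈ L, Q x = 0) (hdim : finrank F L = finrank F M)
    {ι : Type*} [DecidableEq ι] {v : ι → W} (hv : LinearIndependent F v)
    (hvL : Disjoint (span F (range v)) L) :
    ∃ E : ι → W, (∀ k, E k ∈ L) ∧ ∀ k l, polar Q (E k) (v l) = if k = l then 1 else 0 := by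
  set π := M.projectionOnto L hLM.symm
  obtain ⟨ξ, hξ⟩ := (hv.map (f := π) (by rwa [ker_projectionOnto])).exists_dual_eq_ite
  choose E hE using fun k => surjective_polarBilin_domRestrict₁₂ hnd hLM hQL hdim (ξ k)
  refine ⟨fun k => E k, fun k => (E k).2, fun k l => ?_⟩
  have hvl : v l - π (v l) ∈ L := sub_projection_mem hLM.symm (v l)
  have hEk := LinearMap.congr_fun (hE k) (π (v l))
  rw [LinearMap.domRestrict₁₂_apply, polarBilin_apply_apply] at hEk
  calc polar Q (E k) (v l)
      = polar Q (E k) (v l - π (v l)) + polar Q (E k) (π (v l)) := by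
        rw [← polar_add_right, sub_add_cancel]
    _ = ξ k (π (v l)) := by rw [polar_eq_zero_of_mem hQL (E k).2 hvl, zero_add, hEk]
    _ = if k = l then 1 else 0 := hξ k l

end Complement

structure IsHyperbolicFamily {ι : Type*} [DecidableEq ι] (Q : QuadraticForm F W)
    (e f : ι → W) : Prop where
  apply_left : ∀ i, Q (e i) = 0
  apply_right : ∀ i, Q (f i) = 0
  polar_left_left : ∀ i k, polar Q (e i) (e k) = 0
  polar_right_right : ∀ i k, polar Q (f i) (f k) = 0
  polar_left_right : ∀ i k, polar Q (e i) (f k) = if i = k then 1 else 0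

namespace IsHyperbolicFamily

variable {ι : Type*} [DecidableEq ι] {e f : ι → W}

theorem polar_sumElim (h : IsHyperbolicFamily Q e f) (k l : ι ⊕ ι) :
    polar Q (Sum.elim e f k) (Sum.elim e f l) = if k = l.swap then 1 else 0 := by
  rcases k with i | i <;> rcases l with k | k
  · simp [h.polar_left_left]
  · simp [h.polar_left_right]
  · simp [polar_comm Q (f i), h.polar_left_right, eq_comm]
  · simp [h.polar_right_right]

theorem apply_sumElim (h : IsHyperbolicFamily Q e f) (k : ι ⊕ ι) : Q (Sum.elim e f k) = 0 := by
  rcases k with i | i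
  exacts [h.apply_left i, h.apply_right i]

theorem linearIndependent (h : IsHyperbolicFamily Q e f) :
    LinearIndependent F (Sum.elim e f) :=
  linearIndependent_of_eq_ite Q.polarBilin (y := Sum.elim e f ∘ Sum.swap) fun k l => by
    rw [polarBilin_apply_apply, Function.comp_apply, h.polar_sumElim, Sum.swap_swap]

/-- Subtracting `Q v • E` makes `v` singular, as `E` is singular and `polar E v = 1`. -/
theorem of_polar_eq_ite {v E : ι → W} (hv : ∀ l l', polar Q (v l) (v l') = 0)
    (hE : ∀ k, Q (E k) = 0) (hEE : ∀ k k', polar Q (E k) (E k') = 0)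
    (hEv : ∀ k l, polar Q (E k) (v l) = if k = l then 1 else 0) :
    IsHyperbolicFamily Q E fun l => v l - Q (v l) • E l := by
  have hf : ∀ l, Q (v l - Q (v l) • E l) = 0 := fun l => by
    simp [sub_eq_add_neg, QuadraticMap.map_add, QuadraticMap.map_smul, hE, polar_neg_right,
      polar_comm Q (v l) (E l), hEv]
  refine ⟨hE, hf, hEE, fun l l' => ?_, fun k l => ?_⟩
  · obtain rfl | hll' := eq_or_ne l l'
    · rw [polar_self, hf, smul_zero]
    · simp [polar_sub_left, polar_sub_right, hv, polar_comm Q (v l) (E l'), hEv, hEE, hll',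
        hll'.symm]
  · simp [polar_sub_right, hEv, hEE]

theorem sumElim {ι₁ : Type*} [DecidableEq ι₁] {e₁ f₁ : ι₁ → W} {e₂ f₂ : ι → W}
    (h₁ : IsHyperbolicFamily Q e₁ f₁) (h₂ : IsHyperbolicFamily Q e₂ f₂)
    (hee : ∀ i l, polar Q (e₁ i) (e₂ l) = 0) (hef : ∀ i l, polar Q (e₁ i) (f₂ l) = 0)
    (hfe : ∀ i l, polar Q (f₁ i) (e₂ l) = 0) (hff : ∀ i l, polar Q (f₁ i) (f₂ l) = 0) :
    IsHyperbolicFamily Q (Sum.elim e₁ e₂) (Sum.elim f₁ f₂) where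
  apply_left := by rintro (i | l) <;> simp [h₁.apply_left, h₂.apply_left]
  apply_right := by rintro (i | l) <;> simp [h₁.apply_right, h₂.apply_right]
  polar_left_left := by
    rintro (i | l) (i' | l') <;>
      simp [h₁.polar_left_left, h₂.polar_left_left, hee, polar_comm Q (e₂ _) (e₁ _)]
  polar_right_right := by
    rintro (i | l) (i' | l') <;>
      simp [h₁.polar_right_right, h₂.polar_right_right, hff, polar_comm Q (f₂ _) (f₁ _)]
  polar_left_right := by
    rintro (i | l) (i' | l') <;>
      simp [h₁.polar_left_right, h₂.polar_left_right, hef, hfe, polar_comm Q (e₂ _) (f₁ _)]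

variable [FiniteDimensional F W] {J K : Submodule F W}

/-- The new partners are dual vectors to `e₁, e₂` taken in `K`, corrected inside `J` so as to
become orthogonal to `f₂`. -/
theorem exists_sumElim (hnd : Q.polarBilin.SeparatingLeft) (hJK : IsCompl J K)
    (hQJ : ∀ x ∈ J, Q x = 0) (hQK : ∀ x ∈ K, Q x = 0) (hdim : finrank F K = finrank F J)
    {ι₁ : Type*} [DecidableEq ι₁] [Fintype ι] {e₁ : ι₁ → W} {e₂ f₂ : ι → W}
    (h₂ : IsHyperbolicFamily Q e₂ f₂) (hli : LinearIndependent F (Sum.elim e₁ e₂))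
    (heJ : ∀ i, Sum.elim e₁ e₂ i ∈ J) (he₁f₂ : ∀ i l, polar Q (e₁ i) (f₂ l) = 0) :
    ∃ f₁ : ι₁ → W, IsHyperbolicFamily Q (Sum.elim e₁ e₂) (Sum.elim f₁ f₂) := by
  have he₁J : ∀ i, e₁ i ∈ J := fun i => heJ (.inl i)
  have he₂J : ∀ l, e₂ l ∈ J := fun l => heJ (.inr l)
  obtain ⟨w, hwK, hwe⟩ := exists_polar_eq_ite_of_disjoint hnd hJK.symm hQK hdim hli
    (hJK.disjoint.mono_left (span_le.2 (range_subset_iff.2 heJ)))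
  have hwe₁ : ∀ k i, polar Q (w (.inl k)) (e₁ i) = if k = i then 1 else 0 := fun k i => by
    simpa using hwe (.inl k) (.inl i)
  have hwe₂ : ∀ k l, polar Q (w (.inl k)) (e₂ l) = 0 := fun k l => by
    simpa using hwe (.inl k) (.inr l)
  set z : ι₁ → W := fun k => ∑ l, polar Q (w (.inl k)) (f₂ l) • e₂ l
  have hzJ : ∀ k, z k ∈ J := fun k => sum_mem fun l _ => J.smul_mem _ (he₂J l)
  have hpolar_z : ∀ k y, polar Q (z k) y = ∑ l, polar Q (w (.inl k)) (f₂ l) * polar Q (e₂ l) y :=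
    fun k y => by simp only [z, polar_sum_left, polar_smul_left, smul_eq_mul]
  have hwz : ∀ k k', polar Q (w (.inl k)) (z k') = 0 := fun k k' => by
    simp [polar_comm Q (w _) (z _), hpolar_z, polar_comm Q (e₂ _) (w _), hwe₂]
  set f₁ : ι₁ → W := fun k => w (.inl k) - z k
  have h₁ : IsHyperbolicFamily Q e₁ f₁ := by
    refine ⟨fun i => hQJ _ (he₁J i), fun k => ?_,
      fun i i' => polar_eq_zero_of_mem hQJ (he₁J i) (he₁J i'), fun k k' => ?_, fun i k => ?_⟩
    · simp [f₁, sub_eq_add_neg, QuadraticMap.map_add, hQK _ (hwK _), hQJ _ (hzJ k), hwz]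
    · simp [f₁, polar_sub_left, polar_sub_right, polar_eq_zero_of_mem hQK (hwK _) (hwK _), hwz,
        polar_eq_zero_of_mem hQJ (hzJ _) (hzJ _), polar_comm Q (z _) (w _)]
    · simp [f₁, polar_comm Q (e₁ i), hwe₁, eq_comm, polar_eq_zero_of_mem hQJ (hzJ k) (he₁J i)]
  refine ⟨f₁, h₁.sumElim h₂ (fun i l => polar_eq_zero_of_mem hQJ (he₁J i) (he₂J l)) he₁f₂
    (fun k l => ?_) (fun k l => ?_)⟩
  · simp [f₁, polar_sub_left, hwe₂, polar_eq_zero_of_mem hQJ (hzJ k) (he₂J l)]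
  · simp [f₁, polar_sub_left, hpolar_z, h₂.polar_left_right]

theorem exists_of_polar_eq_ite (hnd : Q.polarBilin.SeparatingLeft) (hJK : IsCompl J K)
    (hQJ : ∀ x ∈ J, Q x = 0) (hQK : ∀ x ∈ K, Q x = 0) (hdim : finrank F K = finrank F J)
    {ι₁ : Type*} [Fintype ι₁] [DecidableEq ι₁] [Fintype ι] {e₁ : ι₁ → W} {v E : ι → W}
    (he₁ : LinearIndependent F e₁) (heJ : ∀ i, Sum.elim e₁ E i ∈ J)
    (hvv : ∀ l l', polar Q (v l) (v l') = 0) (he₁v : ∀ i l, polar Q (e₁ i) (v l) = 0)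
    (hEv : ∀ k l, polar Q (E k) (v l) = if k = l then 1 else 0) :
    ∃ f₁ : ι₁ → W,
      IsHyperbolicFamily Q (Sum.elim e₁ E) (Sum.elim f₁ fun l => v l - Q (v l) • E l) := by
  have heli : LinearIndependent F (Sum.elim e₁ E) :=
    linearIndependent_sumElim_of_eq_ite Q.polarBilin he₁ he₁v hEv
  refine (of_polar_eq_ite hvv (fun k => hQJ _ (heJ (.inr k)))
    (fun k k' => polar_eq_zero_of_mem hQJ (heJ (.inr k)) (heJ (.inr k'))) hEv).exists_sumElim
    hnd hJK hQJ hQK hdim heli heJ fun i l => ?_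
  have he₁E : polar Q (e₁ i) (E l) = 0 := polar_eq_zero_of_mem hQJ (heJ (.inl i)) (heJ (.inr l))
  simp [polar_sub_right, he₁v, he₁E]

theorem exists_isometry [Fintype ι] {e' f' : ι → W} (h : IsHyperbolicFamily Q e f)
    (h' : IsHyperbolicFamily Q e' f') (hcard : 2 * Fintype.card ι = finrank F W) :
    ∃ g : W ≃ₗ[F] W, (∀ x, Q (g x) = Q x) ∧ ⇑g ∘ e = e' ∧ ⇑g ∘ f = f' := by
  have hcard' : Fintype.card (ι ⊕ ι) = finrank F W := by simp [← hcard, two_mul]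
  let b := basisOfLinearIndependentOfCardEqFinrank' _ h.linearIndependent hcard'
  let b' := basisOfLinearIndependentOfCardEqFinrank' _ h'.linearIndependent hcard'
  have hg : ∀ k, b.equiv b' (.refl _) (Sum.elim e f k) = Sum.elim e' f' k := fun k => by
    simpa [b, b'] using b.equiv_apply k b' (.refl _)
  refine ⟨b.equiv b' (.refl _), fun x => Q.apply_eq_of_basis _ b ?_ ?_ x,
    funext fun i => hg (.inl i), funext fun i => hg (.inr i)⟩
  · simp [b, hg, h.apply_sumElim, h'.apply_sumElim]
  · simp [b, hg, h.polar_sumElim, h'.polar_sumElim]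

end IsHyperbolicFamily

abbrev SigmaFrameIndex (j m : ℕ) := Fin j ⊕ (Fin m ⊕ Unit)

/-- In a hyperbolic basis `e, f` of `W` this spans the member
`⟨e₁, …, e_j, f_{j+1}, …, f_{n-1}, e_n + f_n⟩` of `Σ`, whose `J`-indicator is `j`
when `J = ⟨e₁, …, e_n⟩`. -/
def sigmaFamily {j m : ℕ} (e f : SigmaFrameIndex j m → W) : SigmaFrameIndex j m → W
  | .inl i => e (.inl i)
  | .inr (.inl i) => f (.inr (.inl i))
  | .inr (.inr u) => e (.inr (.inr u)) + f (.inr (.inr u))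

theorem comp_sigmaFamily {j m : ℕ} (g : W →ₗ[F] W) (e f : SigmaFrameIndex j m → W) :
    g ∘ sigmaFamily e f = sigmaFamily (g ∘ e) (g ∘ f) := by
  funext k
  rcases k with i | i | u <;> simp [sigmaFamily]

namespace InSigmaSet

variable [FiniteDimensional F W] {n : ℕ} {J A : Submodule F W}

theorem finrank_inf_lt (hA : InSigmaSet n Q A) (hQJ : ∀ x ∈ J, Q x = 0) :
    finrank F (A ⊓ J : Submodule F W) < n := by
  obtain ⟨hAn, -, S, hS, hSdim⟩ := hA
  have : A ⊓ J ≤ S := fun x hx => by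
    change x ∈ (S : Set W)
    rw [hS]
    exact ⟨hx.1, hQJ x hx.2⟩
  have := Submodule.finrank_mono this
  omega

theorem exists_span_sumElim_eq [PerfectField F] [CharP F 2] (hA : InSigmaSet n Q A)
    (hQJ : ∀ x ∈ J, Q x = 0) {j m : ℕ} (hj : finrank F (A ⊓ J : Submodule F W) = j)
    (hm : j + m + 1 = n) :
    ∃ (e₁ : Fin j → W) (u : Fin m → W) (a : W), span F (range e₁) = A ⊓ J ∧
      (∀ i, Q (u i) = 0) ∧ Q a = 1 ∧
      span F (range (Sum.elim e₁ (Sum.elim u fun _ : Unit => a))) = A := by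
  obtain ⟨hAn, -, S, hS, hSdim⟩ := hA
  have hmemS : ∀ x, x ∈ S ↔ x ∈ A ∧ Q x = 0 := fun x => Set.ext_iff.1 hS x
  have hSA : S ≤ A := fun x hx => ((hmemS x).1 hx).1
  have hAJS : A ⊓ J ≤ S := fun x hx => (hmemS x).2 ⟨hx.1, hQJ x hx.2⟩
  obtain ⟨a₀, ha₀A, ha₀S⟩ := SetLike.exists_of_lt (lt_of_le_of_ne hSA fun h => by
    rw [h] at hSdim; omega)
  obtain ⟨t, ht⟩ := exists_mul_self_eq F (Q a₀)⁻¹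
  have hQa : Q (t • a₀) = 1 := by
    rw [QuadraticMap.map_smul, smul_eq_mul, ht,
      inv_mul_cancel₀ fun h => ha₀S ((hmemS a₀).2 ⟨ha₀A, h⟩)]
  have haS : t • a₀ ∉ S := fun h => one_ne_zero (hQa ▸ ((hmemS _).1 h).2)
  obtain ⟨U, hdisj, hsup⟩ := IsModularLattice.exists_disjoint_and_sup_eq hAJS
  have hU : finrank F U = m := by
    have := Submodule.finrank_sup_add_finrank_inf_eq (A ⊓ J) U
    rw [hsup, hdisj.eq_bot, finrank_bot] at this
    omega
  obtain ⟨e₁, he₁⟩ := exists_span_range_eq hj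
  obtain ⟨u, hu⟩ := exists_span_range_eq hU
  have huS : ∀ i, u i ∈ S := fun i => hsup ▸ mem_sup_right (hu ▸ subset_span (mem_range_self i))
  refine ⟨e₁, u, t • a₀, he₁, fun i => ((hmemS _).1 (huS i)).2, hQa, ?_⟩
  rw [Sum.elim_range, Sum.elim_range, range_const, span_union, span_union, he₁, hu,
    ← sup_assoc, hsup]
  exact sup_span_singleton_eq_of_finrank_add_one hSA hSdim (A.smul_mem t ha₀A) haS

theorem exists_isHyperbolicFamily [PerfectField F] [CharP F 2]
    (hnd : Q.polarBilin.SeparatingLeft) {K : Submodule F W} (hJK : IsCompl J K)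
    (hJ : finrank F J = n) (hK : finrank F K = n) (hQJ : ∀ x ∈ J, Q x = 0)
    (hQK : ∀ x ∈ K, Q x = 0) (hA : InSigmaSet n Q A) {j m : ℕ}
    (hj : finrank F (A ⊓ J : Submodule F W) = j) (hm : j + m + 1 = n) :
    ∃ e f : SigmaFrameIndex j m → W, IsHyperbolicFamily Q e f ∧ span F (range e) = J ∧
      span F (range (sigmaFamily e f)) = A := by
  obtain ⟨e₁, u, a, he₁, hu, ha, hspan⟩ := hA.exists_span_sumElim_eq hQJ hj hm
  set v : Fin m ⊕ Unit → W := Sum.elim u fun _ => a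
  have hli : LinearIndependent F (Sum.elim e₁ v) := by
    rw [linearIndependent_iff_card_eq_finrank_span, Set.finrank, hspan, hA.1]
    simp only [Fintype.card_sum, Fintype.card_fin, Fintype.card_unique]
    omega
  obtain ⟨he₁li, hvli, hdisj⟩ := linearIndependent_sum.1 hli
  rw [Sum.elim_comp_inl] at he₁li
  rw [Sum.elim_comp_inr] at hvli
  rw [Sum.elim_comp_inl, Sum.elim_comp_inr, he₁] at hdisj
  have hvA : ∀ l, v l ∈ A := fun l => hspan ▸ subset_span ⟨.inr l, rfl⟩
  have hvJ : Disjoint (span F (range v)) J := by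
    rw [disjoint_iff, ← inf_eq_left.2 (span_le.2 (range_subset_iff.2 hvA)), inf_assoc]
    exact hdisj.symm.eq_bot
  obtain ⟨E, hEJ, hEv⟩ := exists_polar_eq_ite_of_disjoint hnd hJK hQJ (hJ.trans hK.symm) hvli hvJ
  have he₁A : ∀ i, e₁ i ∈ A ⊓ J := fun i => he₁ ▸ subset_span (mem_range_self i)
  have heJ : ∀ i, Sum.elim e₁ E i ∈ J := by
    rintro (i | k)
    exacts [(he₁A i).2, hEJ k]
  obtain ⟨f₁, hf⟩ := IsHyperbolicFamily.exists_of_polar_eq_ite hnd hJK hQJ hQK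
    (hK.trans hJ.symm) he₁li heJ
    (fun l l' => hA.2.1 _ (hvA l) _ (hvA l')) (fun i l => hA.2.1 _ (he₁A i).1 _ (hvA l)) hEv
  refine ⟨Sum.elim e₁ E, Sum.elim f₁ _, hf, ?_, ?_⟩
  · refine eq_of_le_of_finrank_eq (span_le.2 (range_subset_iff.2 heJ)) ?_
    rw [finrank_span_eq_card (linearIndependent_of_eq_ite Q.polarBilin hf.polar_left_right), hJ]
    simp only [Fintype.card_sum, Fintype.card_fin, Fintype.card_unique]
    omega
  · convert hspan using 3
    funext k
    rcases k with i | i | u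
    · rfl
    · simp [sigmaFamily, v, hu]
    · simp [sigmaFamily, v, ha]

end InSigmaSet

end QuadraticSpace

/-- Two members `A`, `B` of `Σ` are in the same orbit of the parabolic subgroup
`P` (the stabilizer of `J` in the orthogonal group of `Q`) if and only if they
have the same `J`-indicator `dim (A ∩ J)`. -/
theorem sigma_same_parabolic_orbit_iff_J_indicator_eq
    {F W : Type*} [Field F] [PerfectField F] [CharP F 2]
    [AddCommGroup W] [Module F W] [FiniteDimensional F W]
    (n : ℕ) (hW : Module.finrank F W = 2 * n)
    (Q : QuadraticForm F W)
    (hnd : ∀ x : W, (∀ y : W, QuadraticMap.polar (⇑Q) x y = 0) → x = 0)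
    (J K : Submodule F W) (hJK : IsCompl J K)
    (hJ : Module.finrank F J = n) (hK : Module.finrank F K = n)
    (hQJ : ∀ x ∈ J, Q x = 0) (hQK : ∀ x ∈ K, Q x = 0)
    (A B : Submodule F W) (hA : InSigmaSet n Q A) (hB : InSigmaSet n Q B) :
    (∃ g : W ≃ₗ[F] W, (∀ x : W, Q (g x) = Q x) ∧
        Submodule.map (g : W →ₗ[F] W) J = J ∧
        Submodule.map (g : W →ₗ[F] W) A = B) ↔
      Module.finrank F ↥(A ⊓ J) = Module.finrank F ↥(B ⊓ J) := by
  constructor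
  · rintro ⟨g, -, hgJ, hgA⟩
    rw [← LinearEquiv.finrank_map_eq g, map_inf _ g.injective, hgA, hgJ]
  · intro h
    set j := finrank F ↥(A ⊓ J)
    obtain ⟨m, hm⟩ := Nat.exists_eq_add_of_lt (hA.finrank_inf_lt hQJ)
    obtain ⟨e, f, hef, heJ, hfA⟩ :=
      hA.exists_isHyperbolicFamily hnd hJK hJ hK hQJ hQK rfl hm.symm
    obtain ⟨e', f', hef', heJ', hfB⟩ :=
      hB.exists_isHyperbolicFamily hnd hJK hJ hK hQJ hQK h.symm hm.symm
    have hcard : 2 * Fintype.card (SigmaFrameIndex j m) = finrank F W := by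
      simp only [Fintype.card_sum, Fintype.card_fin, Fintype.card_unique, hW]
      omega
    obtain ⟨g, hgQ, hge, hgf⟩ := hef.exists_isometry hef' hcard
    refine ⟨g, hgQ, ?_, ?_⟩
    · conv_lhs => rw [← heJ]
      rw [map_span, ← range_comp, LinearEquiv.coe_coe, hge, heJ']
    · rw [← hfA, map_span, ← range_comp, comp_sigmaFamily, LinearEquiv.coe_coe, hge, hgf, hfB]
end

section
/- For every vector v ∈ W with Q(v) ≠ 0, the subspace F·v + (J ∩ v^⊥) belongs to Σ, where v^⊥ denotes the orthogonal complement of v with respect to the polar bilinear form. In particular, Σ is nonempty. -/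
/-- For every nonsingular vector `v ∈ W`, the subspace `F·v + (J ∩ v^⊥)`
belongs to `Σ`; in particular `Σ` is nonempty. -/
theorem span_sup_inf_perp_mem_sigma
    {F W : Type*} [Field F] [PerfectField F] [CharP F 2]
    [AddCommGroup W] [Module F W] [FiniteDimensional F W]
    (n : ℕ) (hW : Module.finrank F W = 2 * n)
    (Q : QuadraticForm F W)
    (hnd : ∀ x : W, (∀ y : W, QuadraticMap.polar (⇑Q) x y = 0) → x = 0)
    (J K : Submodule F W) (hJK : IsCompl J K)
    (hJ : Module.finrank F J = n) (hK : Module.finrank F K = n)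
    (hQJ : ∀ x ∈ J, Q x = 0) (hQK : ∀ x ∈ K, Q x = 0)
    (v : W) (hv : Q v ≠ 0) :
    InSigmaSet n Q
      (Submodule.span F {v} ⊔ (J ⊓ LinearMap.ker (QuadraticMap.polarBilin Q v))) := by
  classical
  set f : W →ₗ[F] F := QuadraticMap.polarBilin Q v with hf
  have hfapp : ∀ y, f y = QuadraticMap.polar (⇑Q) v y := fun y => rfl
  -- polar vanishes on J × J and K × K
  have hpJ : ∀ x ∈ J, ∀ y ∈ J, QuadraticMap.polar (⇑Q) x y = 0 := by
    intro x hx y hy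
    simp [QuadraticMap.polar, hQJ _ (J.add_mem hx hy), hQJ _ hx, hQJ _ hy]
  have hpK : ∀ x ∈ K, ∀ y ∈ K, QuadraticMap.polar (⇑Q) x y = 0 := by
    intro x hx y hy
    simp [QuadraticMap.polar, hQK _ (K.add_mem hx hy), hQK _ hx, hQK _ hy]
  -- v ∉ J
  have hvJ : v ∉ J := fun h => hv (hQJ v h)
  have hv0 : v ≠ 0 := fun h => hv (by simp [h])
  -- f is not identically zero on J
  have hfJ : ∃ j ∈ J, f j ≠ 0 := by
    by_contra h
    push_neg at h
    -- decompose v = j0 + k0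
    obtain ⟨j0, hj0, k0, hk0, hvd⟩ : ∃ j0 ∈ J, ∃ k0 ∈ K, j0 + k0 = v := by
      have : v ∈ J ⊔ K := by rw [hJK.sup_eq_top]; trivial
      rcases Submodule.mem_sup.mp this with ⟨a, ha, b, hb, hab⟩
      exact ⟨a, ha, b, hb, hab⟩
    have hk0 : k0 = 0 := by
      apply hnd
      intro y
      have : y ∈ J ⊔ K := by rw [hJK.sup_eq_top]; trivial
      rcases Submodule.mem_sup.mp this with ⟨a, ha, b, hb, hab⟩
      have h1 : QuadraticMap.polar (⇑Q) k0 a = 0 := by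
        have hva : QuadraticMap.polar (⇑Q) v a = 0 := h a ha
        have : QuadraticMap.polar (⇑Q) v a
            = QuadraticMap.polar (⇑Q) j0 a + QuadraticMap.polar (⇑Q) k0 a := by
          rw [← hvd, QuadraticMap.polar_add_left]
        rw [this, hpJ _ hj0 _ ha, zero_add] at hva
        exact hva
      have h2 : QuadraticMap.polar (⇑Q) k0 b = 0 := hpK _ hk0 _ hb
      rw [← hab, QuadraticMap.polar_add_right, h1, h2, add_zero]
    exact hvJ (by rw [← hvd, hk0, add_zero]; exact hj0)
  obtain ⟨j1, hj1J, hj1⟩ := hfJ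
  -- the singular subspace S₀ = J ⊓ ker f
  set S₀ : Submodule F W := J ⊓ LinearMap.ker f with hS₀
  -- dimension of S₀ : finrank S₀ + 1 = n
  have hdimS : Module.finrank F S₀ + 1 = n := by
    set g : J →ₗ[F] F := f.comp J.subtype with hg
    have hker : LinearMap.ker g = Submodule.comap J.subtype (LinearMap.ker f) := by
      rw [hg, LinearMap.ker_comp]
    have hrange : LinearMap.range g = ⊤ := by
      rw [eq_top_iff]
      intro c _
      refine ⟨(c / f j1) • ⟨j1, hj1J⟩, ?_⟩
      have : g ((c / f j1) • ⟨j1, hj1J⟩) = (c / f j1) * f j1 := by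
        simp [hg, smul_eq_mul]
      rw [this, div_mul_cancel₀ _ hj1]
    have hrn := LinearMap.finrank_range_add_finrank_ker g
    rw [hrange, finrank_top] at hrn
    have hS0eq : Module.finrank F S₀ = Module.finrank F (LinearMap.ker g) := by
      rw [hker]
      have : S₀ = Submodule.map J.subtype
          (Submodule.comap J.subtype (LinearMap.ker f)) := by
        rw [Submodule.map_comap_subtype]
      rw [this, Submodule.finrank_map_subtype_eq]
    rw [hS0eq]
    have h1 : Module.finrank F F = 1 := Module.finrank_self F
    omega
  -- decomposition of elements of A
  set A : Submodule F W := Submodule.span F {v} ⊔ S₀ with hA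
  have hmemA : ∀ x ∈ A, ∃ c : F, ∃ j ∈ S₀, x = c • v + j := by
    intro x hx
    rcases Submodule.mem_sup.mp hx with ⟨y, hy, z, hz, rfl⟩
    rcases Submodule.mem_span_singleton.mp hy with ⟨c, rfl⟩
    exact ⟨c, z, hz, rfl⟩
  -- Q on A
  have hQA : ∀ (c : F), ∀ j ∈ S₀, Q (c • v + j) = c * c * Q v := by
    intro c j hj
    obtain ⟨hjJ, hjk⟩ := hj
    have hpol : QuadraticMap.polar (⇑Q) (c • v) j = 0 := by
      rw [QuadraticMap.polar_smul_left]
      have : QuadraticMap.polar (⇑Q) v j = 0 := hjk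
      rw [this, smul_zero]
    have : Q (c • v + j) = Q (c • v) + Q j + QuadraticMap.polar (⇑Q) (c • v) j := by
      simp only [QuadraticMap.polar]; ring
    rw [this, hpol, hQJ _ hjJ, QuadraticMap.map_smul, add_zero, add_zero, smul_eq_mul]
  -- polar vanishes on A
  have hpolA : ∀ x ∈ A, ∀ y ∈ A, QuadraticMap.polar (⇑Q) x y = 0 := by
    intro x hx y hy
    obtain ⟨a, j, hj, rfl⟩ := hmemA x hx
    obtain ⟨b, j', hj', rfl⟩ := hmemA y hy
    obtain ⟨hjJ, hjk⟩ := hj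
    obtain ⟨hj'J, hj'k⟩ := hj'
    have hvv : QuadraticMap.polar (⇑Q) v v = 0 := by
      rw [QuadraticMap.polar_self]
      have : (2 : F) = 0 := by
        have := CharP.cast_eq_zero F 2; simpa using this
      rw [two_smul, ← two_mul, this, zero_mul]
    have hvj' : QuadraticMap.polar (⇑Q) v j' = 0 := hj'k
    have hjv : QuadraticMap.polar (⇑Q) j v = 0 := by
      rw [QuadraticMap.polar_comm]; exact hjk
    have hjj' : QuadraticMap.polar (⇑Q) j j' = 0 := hpJ _ hjJ _ hj'J
    rw [QuadraticMap.polar_add_left, QuadraticMap.polar_add_right,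
      QuadraticMap.polar_add_right, QuadraticMap.polar_smul_left,
      QuadraticMap.polar_smul_left, QuadraticMap.polar_smul_right,
      QuadraticMap.polar_smul_right, hvv, hvj', hjv, hjj']
    simp
  -- disjointness and dimension of A
  have hdisj : Submodule.span F {v} ⊓ S₀ = ⊥ := by
    rw [eq_bot_iff]
    rintro x ⟨hx1, hx2, _⟩
    rcases Submodule.mem_span_singleton.mp hx1 with ⟨c, rfl⟩
    rcases eq_or_ne c 0 with rfl | hc
    · simp
    · exact absurd ((J.smul_mem_iff hc).mp hx2) hvJ
  have hdimA : Module.finrank F A = n := by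
    have := Submodule.finrank_sup_add_finrank_inf_eq (Submodule.span F {v}) S₀
    rw [hdisj, finrank_span_singleton hv0] at this
    simp only [finrank_bot, add_zero] at this
    rw [hA]
    omega
  refine ⟨hdimA, hpolA, S₀, ?_, by rw [hdimA, hdimS]⟩
  ext x
  simp only [SetLike.mem_coe, Set.mem_setOf_eq]
  constructor
  · intro hx
    refine ⟨Submodule.mem_sup_right hx, hQJ _ hx.1⟩
  · rintro ⟨hxA, hxQ⟩
    obtain ⟨c, j, hj, rfl⟩ := hmemA _ hxA
    rw [hQA c j hj] at hxQ
    have hc : c = 0 := by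
      rcases mul_eq_zero.mp hxQ with h | h
      · rcases mul_eq_zero.mp h with h | h <;> exact h
      · exact absurd h hv
    rw [hc, zero_smul, zero_add]
    exact hj
end

section
/- Let A ∈ Σ, let R = A ∩ J, and let H = {g ∈ P : g(A) = A} be the stabilizer of A in P. Then the natural homomorphism from H to GL(R), given by restricting each element of H to the H-invariant subspace R, is surjective; that is, H induces the full group GL(j, F) on R, where j = dim(A ∩ J). -/
/-!
Extend `φ` to an automorphism `ψ` of `J` that moves every vector only by an element of
`R = A ∩ J`. The polar form identifies `K` with the dual of `J`, so `ψ` has a contragredient `χ`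
on `K`, and `ψ ⊕ χ` preserves `Q` because `Q (x + y)` is the polar pairing of `x ∈ J` and
`y ∈ K`. As `A` is totally isotropic, the `K`-components of vectors of `A` are orthogonal to `R`,
hence fixed by `χ`; so `ψ ⊕ χ` moves `A` only inside `R ≤ A`.
-/

namespace LinearEquiv

variable {R V : Type*} [Ring R] [AddCommGroup V] [Module R V] {p q : Submodule R V}
  (h : IsCompl p q) (e₁ : p ≃ₗ[R] p) (e₂ : q ≃ₗ[R] q)

noncomputable def ofIsCompl : V ≃ₗ[R] V :=
  (p.prodEquivOfIsCompl q h).symm ≪≫ₗ e₁.prodCongr e₂ ≪≫ₗ p.prodEquivOfIsCompl q h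

theorem ofIsCompl_apply_add (x : p) (y : q) : ofIsCompl h e₁ e₂ (x + y) = e₁ x + e₂ y := by
  have : (p.prodEquivOfIsCompl q h).symm (x + y) = (x, y) := by rw [symm_apply_eq]; rfl
  simp [ofIsCompl, this]

theorem ofIsCompl_apply_left (x : p) : ofIsCompl h e₁ e₂ x = e₁ x := by
  simpa using ofIsCompl_apply_add h e₁ e₂ x 0

end LinearEquiv

namespace Submodule

variable {F V : Type*} [Field F] [AddCommGroup V] [Module F V]

theorem exists_extend_linearEquiv (S : Submodule F V) (φ : S ≃ₗ[F] S) :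
    ∃ ψ : V ≃ₗ[F] V, (∀ x, ψ x - x ∈ S) ∧ ∀ s : S, ψ s = φ s := by
  obtain ⟨C, hC⟩ := S.exists_isCompl
  refine ⟨.ofIsCompl hC φ (.refl F C), fun x ↦ ?_, LinearEquiv.ofIsCompl_apply_left hC φ _⟩
  obtain ⟨s, c, rfl⟩ := mem_sup'.mp (hC.codisjoint.eq_top ▸ mem_top (x := x))
  rw [LinearEquiv.ofIsCompl_apply_add, LinearEquiv.refl_apply, add_sub_add_right_eq_sub]
  exact sub_mem (φ s).2 s.2

theorem exists_extend_linearEquiv_of_le {S J : Submodule F V} (hSJ : S ≤ J)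
    (φ : S ≃ₗ[F] S) :
    ∃ ψ : J ≃ₗ[F] J, (∀ x : J, (ψ x : V) - x ∈ S) ∧
      ∀ s : S, (ψ (inclusion hSJ s) : V) = φ s := by
  let e := comapSubtypeEquivOfLe hSJ
  obtain ⟨ψ, hψS, hψφ⟩ := exists_extend_linearEquiv _ (e ≪≫ₗ φ ≪≫ₗ e.symm)
  refine ⟨ψ, hψS, fun s ↦ ?_⟩
  rw [show inclusion hSJ s = (e.symm s : J) from rfl, hψφ]
  simp only [LinearEquiv.trans_apply, LinearEquiv.apply_symm_apply]
  rfl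

theorem map_equiv_eq_of_forall_mem {p : Submodule F V} [FiniteDimensional F p]
    (g : V ≃ₗ[F] V) (h : ∀ x ∈ p, g x ∈ p) : p.map (g : V →ₗ[F] V) = p :=
  eq_of_le_of_finrank_eq (map_le_iff_le_comap.mpr h) (g.finrank_map_eq p)

end Submodule

namespace LinearMap.BilinForm

variable {F W : Type*} [Field F] [AddCommGroup W] [Module F W] {B : LinearMap.BilinForm F W}
  {J K : Submodule F W}

theorem injective_domRestrict₁₂ (hB : B.SeparatingLeft) (hJK : Codisjoint J K)
    (hJ : ∀ x ∈ J, ∀ y ∈ J, B x y = 0) : Function.Injective (B.domRestrict₁₂ J K) := by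
  refine LinearMap.ker_eq_bot.mp (LinearMap.ker_eq_bot'.mpr fun x hx ↦ Subtype.ext (hB x ?_))
  intro w
  obtain ⟨u, v, rfl⟩ := Submodule.mem_sup'.mp (hJK.eq_top ▸ Submodule.mem_top (x := w))
  rw [map_add, hJ x x.2 u u.2, zero_add]
  exact LinearMap.congr_fun hx v

theorem bijective_flip_domRestrict₁₂ [FiniteDimensional F W] (hB : B.Nondegenerate)
    (hJK : Codisjoint J K) (hJ : ∀ x ∈ J, ∀ y ∈ J, B x y = 0)
    (hK : ∀ x ∈ K, ∀ y ∈ K, B x y = 0) :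
    Function.Bijective (B.domRestrict₁₂ J K).flip := by
  have hinjJ := injective_domRestrict₁₂ hB.1 hJK hJ
  have hinjK : Function.Injective (B.domRestrict₁₂ J K).flip :=
    injective_domRestrict₁₂ (B := B.flip) (flip_separatingLeft.mpr hB.2) hJK.symm
      fun x hx y hy ↦ hK y hy x hx
  have hle₁ := LinearMap.finrank_le_finrank_of_injective hinjJ
  have hle₂ := LinearMap.finrank_le_finrank_of_injective hinjK
  rw [Subspace.dual_finrank_eq] at hle₁ hle₂
  exact ⟨hinjK, (LinearMap.injective_iff_surjective_of_finrank_eq_finrank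
    (by rw [Subspace.dual_finrank_eq]; omega)).mp hinjK⟩

theorem exists_contragredient [FiniteDimensional F W] (hB : B.Nondegenerate)
    (hJK : Codisjoint J K) (hJ : ∀ x ∈ J, ∀ y ∈ J, B x y = 0)
    (hK : ∀ x ∈ K, ∀ y ∈ K, B x y = 0) (ψ : J ≃ₗ[F] J) :
    ∃ χ : K ≃ₗ[F] K, (∀ x y, B (ψ x) (χ y) = B x y) ∧
      ∀ y : K, (∀ x : J, B (ψ x) y = B x y) → χ y = y := by
  have hΦ := bijective_flip_domRestrict₁₂ hB hJK hJ hK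
  let Φ := LinearEquiv.ofBijective _ hΦ
  have hχ : ∀ x y, B (ψ x) ((Φ.symm (ψ.symm.dualMap (Φ y))) : K) = B x y := by
    intro x y
    have := LinearMap.congr_fun (Φ.apply_symm_apply (ψ.symm.dualMap (Φ y))) (ψ x)
    rwa [LinearEquiv.dualMap_apply, LinearEquiv.symm_apply_apply] at this
  refine ⟨Φ ≪≫ₗ ψ.symm.dualMap ≪≫ₗ Φ.symm, hχ, fun y hy ↦ hΦ.1 ?_⟩
  ext x
  obtain ⟨x, rfl⟩ := ψ.surjective x
  exact (hχ x y).trans (hy x).symm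

end LinearMap.BilinForm

namespace QuadraticMap

variable {R M N : Type*} [CommRing R] [AddCommGroup M] [Module R M] [AddCommGroup N]
  [Module R N] {Q : QuadraticMap R M N}

theorem isRefl_polarBilin : (polarBilin Q).IsRefl := fun x y h ↦ by
  rwa [polarBilin_apply_apply, polar_comm] at h

theorem polar_eq_zero_of_forall_eq_zero {J : Submodule R M} (hQJ : ∀ x ∈ J, Q x = 0)
    {x y : M} (hx : x ∈ J) (hy : y ∈ J) : polar Q x y = 0 := by
  rw [polar, hQJ _ (J.add_mem hx hy), hQJ x hx, hQJ y hy, sub_zero, sub_zero]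

theorem map_add_eq_polar {x y : M} (hx : Q x = 0) (hy : Q y = 0) : Q (x + y) = polar Q x y := by
  rw [polar, hx, hy, sub_zero, sub_zero]

end QuadraticMap

open QuadraticMap in
theorem QuadraticForm.exists_isometry_stabilizing_extending {F W : Type*} [Field F]
    [AddCommGroup W] [Module F W] [FiniteDimensional F W] {Q : QuadraticForm F W}
    (hQ : (polarBilin Q).Nondegenerate) {J K : Submodule F W} (hJK : IsCompl J K)
    (hQJ : ∀ x ∈ J, Q x = 0) (hQK : ∀ x ∈ K, Q x = 0) {R A : Submodule F W} (hRJ : R ≤ J)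
    (hRA : R ≤ A) (hAR : ∀ r ∈ R, ∀ a ∈ A, polar Q r a = 0) (φ : R ≃ₗ[F] R) :
    ∃ g : W ≃ₗ[F] W, (∀ x, Q (g x) = Q x) ∧ J.map (g : W →ₗ[F] W) = J ∧
      A.map (g : W →ₗ[F] W) = A ∧ ∀ x : R, g x = φ x := by
  have hJ := fun x (hx : x ∈ J) y (hy : y ∈ J) ↦ polar_eq_zero_of_forall_eq_zero hQJ hx hy
  have hK := fun x (hx : x ∈ K) y (hy : y ∈ K) ↦ polar_eq_zero_of_forall_eq_zero hQK hx hy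
  obtain ⟨ψ, hψR, hψφ⟩ := Submodule.exists_extend_linearEquiv_of_le hRJ φ
  obtain ⟨χ, hχ, hχ_fix⟩ :=
    LinearMap.BilinForm.exists_contragredient hQ hJK.codisjoint hJ hK ψ
  let g := LinearEquiv.ofIsCompl hJK ψ χ
  have hdecomp (w : W) : ∃ (x : J) (y : K), (x : W) + y = w :=
    Submodule.mem_sup'.mp (hJK.codisjoint.eq_top ▸ Submodule.mem_top)
  have hgA (a : W) (ha : a ∈ A) : g a - a ∈ R := by
    obtain ⟨x, y, rfl⟩ := hdecomp a
    have hRy (r : W) (hr : r ∈ R) : polar Q r y = 0 := by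
      simpa [polar_add_right, hJ r (hRJ hr) x x.2] using hAR r hr _ ha
    have hχy : χ y = y := hχ_fix y fun x' ↦ by
      have : polar Q (ψ x' - x') y = 0 := hRy _ (hψR x')
      rwa [polar_sub_left, sub_eq_zero] at this
    rw [LinearEquiv.ofIsCompl_apply_add, hχy, add_sub_add_right_eq_sub]
    exact hψR x
  refine ⟨g, fun w ↦ ?_, ?_, ?_, fun x ↦ ?_⟩
  · obtain ⟨x, y, rfl⟩ := hdecomp w
    rw [LinearEquiv.ofIsCompl_apply_add, map_add_eq_polar (hQJ _ (ψ x).2) (hQK _ (χ y).2),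
      map_add_eq_polar (hQJ _ x.2) (hQK _ y.2)]
    exact hχ x y
  · refine Submodule.map_equiv_eq_of_forall_mem g fun x hx ↦ ?_
    rw [show x = ((⟨x, hx⟩ : J) : W) from rfl, LinearEquiv.ofIsCompl_apply_left]
    exact (ψ _).2
  · refine Submodule.map_equiv_eq_of_forall_mem g fun a ha ↦ ?_
    simpa using A.add_mem ha (hRA (hgA a ha))
  · rw [show (x : W) = ((Submodule.inclusion hRJ x : J) : W) from rfl,
      LinearEquiv.ofIsCompl_apply_left, hψφ]

theorem stabilizer_induces_full_GL_on_R_general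
    {F W : Type*} [Field F]
    [AddCommGroup W] [Module F W] [FiniteDimensional F W]
    (n : ℕ)
    (Q : QuadraticForm F W)
    (hnd : ∀ x : W, (∀ y : W, QuadraticMap.polar (⇑Q) x y = 0) → x = 0)
    (J K : Submodule F W) (hJK : IsCompl J K)
    (hQJ : ∀ x ∈ J, Q x = 0) (hQK : ∀ x ∈ K, Q x = 0)
    (A : Submodule F W) (hA : InSigmaSet n Q A)
    (φ : ↥(A ⊓ J) ≃ₗ[F] ↥(A ⊓ J)) :
    ∃ g : W ≃ₗ[F] W, (∀ x : W, Q (g x) = Q x) ∧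
      Submodule.map (g : W →ₗ[F] W) J = J ∧
      Submodule.map (g : W →ₗ[F] W) A = A ∧
      ∀ (x : W) (hx : x ∈ A ⊓ J), g x = ↑(φ ⟨x, hx⟩) := by
  have hQ := QuadraticMap.isRefl_polarBilin.nondegenerate_iff_separatingLeft.mpr hnd
  obtain ⟨g, hgQ, hgJ, hgA, hgφ⟩ := QuadraticForm.exists_isometry_stabilizing_extending hQ hJK
    hQJ hQK inf_le_right inf_le_left (fun r hr a ha ↦ hA.2.1 r hr.1 a ha) φ
  exact ⟨g, hgQ, hgJ, hgA, fun x hx ↦ hgφ ⟨x, hx⟩⟩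

/-- The stabilizer `H` of `A ∈ Σ` in the parabolic subgroup `P` induces the
full general linear group on `R = A ∩ J`: every linear automorphism `φ` of `R`
is the restriction to `R` of some element of `H`. -/
theorem stabilizer_induces_full_GL_on_R
    {F W : Type*} [Field F] [PerfectField F] [CharP F 2]
    [AddCommGroup W] [Module F W] [FiniteDimensional F W]
    (n : ℕ) (hW : Module.finrank F W = 2 * n)
    (Q : QuadraticForm F W)
    (hnd : ∀ x : W, (∀ y : W, QuadraticMap.polar (⇑Q) x y = 0) → x = 0)
    (J K : Submodule F W) (hJK : IsCompl J K)
    (hJ : Module.finrank F J = n) (hK : Module.finrank F K = n)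
    (hQJ : ∀ x ∈ J, Q x = 0) (hQK : ∀ x ∈ K, Q x = 0)
    (A : Submodule F W) (hA : InSigmaSet n Q A)
    (φ : ↥(A ⊓ J) ≃ₗ[F] ↥(A ⊓ J)) :
    ∃ g : W ≃ₗ[F] W, (∀ x : W, Q (g x) = Q x) ∧
      Submodule.map (g : W →ₗ[F] W) J = J ∧
      Submodule.map (g : W →ₗ[F] W) A = A ∧
      ∀ (x : W) (hx : x ∈ A ⊓ J), g x = ↑(φ ⟨x, hx⟩) :=
  stabilizer_induces_full_GL_on_R_general n Q hnd J K hJK hQJ hQK A hA φ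
end

section
/- The group J₁ of determinant-one signed permutation transformations of ℂ^16 contains no subgroup isomorphic to the symmetric group Sym₁₆; moreover, there is no subgroup S ≤ J₁ possessing a central subgroup Z ≤ Z(S) of order 2 with S/Z isomorphic to Sym₁₆. -/
/-!
Every `g ∈ J` sends `eᵢ` to `±e_{σ i}`, and `g ↦ σ` is a homomorphism `J → Sym₁₆` whose
kernel, the diagonal sign matrices, is abelian. As `Sym₁₆` has no nontrivial abelian normal
subgroup, in both situations `S` maps onto `Sym₁₆` and the kernel consists of the scalars `±1`
(in the second case it is `Z`, and a diagonal sign matrix commuting with lifts of all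
transpositions is scalar). Now lift a transposition `(a b)` to `x ∈ S` with signs `s`. Then
`x²`, and the commutator of `x` with a lift of a disjoint transposition `(c d)`, are scalars
fixing some `eⱼ`, hence trivial: so `s a * s b = 1` and `s c = s d`. Since `16 - 2` is even,
`∏ sᵢ = 1`, so `det x = sign (a b) = -1`, although `x ∈ J₁`.
-/

/-- The double orthonormal basis `D = {±e_i}` of `ℂ^16`. -/
def doubleBasis : Set (Fin 16 → ℂ) :=
  {v | ∃ i : Fin 16, v = Pi.single i 1 ∨ v = -Pi.single i 1}

/-- The group `J₁` of signed permutation transformations of `ℂ^16` of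
determinant one, as a subset of the group of linear automorphisms of `ℂ^16`:
those `g` with `g(D) = D` and `det g = 1`. -/
def J1 : Set ((Fin 16 → ℂ) ≃ₗ[ℂ] (Fin 16 → ℂ)) :=
  {g | (⇑g) '' doubleBasis = doubleBasis ∧
    LinearMap.det (g : (Fin 16 → ℂ) →ₗ[ℂ] (Fin 16 → ℂ)) = 1}

open Equiv Function

theorem Finset.exists_notMem_of_card_lt {ι : Type*} [Fintype ι] {u : Finset ι}
    (hu : u.card < Nat.card ι) : ∃ j, j ∉ u := by
  obtain ⟨j, -, hj⟩ := exists_mem_notMem_of_card_lt_card (s := u) (t := univ)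
    (by rwa [card_univ, ← Nat.card_eq_fintype_card])
  exact ⟨j, hj⟩

theorem Finset.prod_eq_one_of_pair_mul_eq_one_of_eq_on_compl {ι M : Type*} [Fintype ι]
    [DecidableEq ι] [CommMonoid M] (heven : Even (Nat.card ι)) {s : ι → M} {a b : ι} {t : M}
    (hab : a ≠ b) (hpair : s a * s b = 1) (hrest : ∀ c, c ≠ a → c ≠ b → s c = t)
    (ht : t * t = 1) : ∏ i, s i = 1 := by
  have hb : b ∈ univ.erase a := mem_erase.mpr ⟨hab.symm, mem_univ b⟩
  have hcard : ((univ.erase a).erase b).card = Nat.card ι - 2 := by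
    rw [card_erase_of_mem hb, card_erase_of_mem (mem_univ a), card_univ,
      Nat.card_eq_fintype_card, Nat.sub_sub]
  obtain ⟨k, hk⟩ := heven.tsub even_two
  rw [← mul_prod_erase univ s (mem_univ a), ← mul_prod_erase _ s hb, ← mul_assoc, hpair,
    one_mul, prod_eq_pow_card (b := t) fun c hc => hrest c
      (ne_of_mem_erase (mem_of_mem_erase hc)) (ne_of_mem_erase hc),
    hcard, hk, pow_add, ← mul_pow, ht, one_pow]

theorem Equiv.Perm.eq_bot_of_isMulCommutative {α : Type*} [Fintype α] [DecidableEq α]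
    (hα : 5 ≤ Nat.card α) (N : Subgroup (Perm α)) [N.Normal] [IsMulCommutative N] :
    N = ⊥ := by
  by_contra hN
  have hA := alternatingGroup_le_of_normal hα ((Subgroup.nontrivial_iff_ne_bot N).mpr hN)
  have : IsMulCommutative (alternatingGroup α) :=
    .of_setLike_mul_comm fun a ha b hb => setLike_mul_comm (hA ha) (hA hb)
  have := alternatingGroup.isMulCommutative_iff_card_le_three.mp this
  omega

theorem Subgroup.le_ker_of_isMulCommutative {G α : Type*} [Group G] [Fintype α]
    [DecidableEq α] (hα : 5 ≤ Nat.card α) (N : Subgroup G) [N.Normal] [IsMulCommutative N]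
    {φ : G →* Perm α} (hφ : Surjective φ) : N ≤ φ.ker := by
  have : (N.map φ).Normal := Subgroup.Normal.map inferInstance φ hφ
  exact (Subgroup.map_eq_bot_iff N).mp (Perm.eq_bot_of_isMulCommutative hα _)

theorem MonoidHom.ker_eq_and_surjective_of_ker_le_of_card_ker_eq_two {G H : Type*} [Group G]
    [Group H] [Finite H] {f π : G →* H} (hπ : Surjective π) (hcard : Nat.card π.ker = 2)
    (hle : f.ker ≤ π.ker) : f.ker = π.ker ∧ Surjective f := by
  have hquot := Nat.card_congr (QuotientGroup.quotientKerEquivOfSurjective π hπ).toEquiv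
  have hcardG : Nat.card G = Nat.card H * 2 := by
    rw [Subgroup.card_eq_card_quotient_mul_card_subgroup π.ker, hcard, hquot]
  have : Finite G := Nat.finite_of_card_ne_zero <| by
    rw [hcardG]
    exact mul_ne_zero Nat.card_pos.ne' two_ne_zero
  have hker : f.ker = π.ker := by
    refine Subgroup.eq_of_le_of_card_ge hle ?_
    rw [hcard]
    apply (Subgroup.one_lt_card_iff_ne_bot _).mpr
    rw [Ne, MonoidHom.ker_eq_bot_iff]
    intro hinj
    have := Nat.card_le_card_of_injective _ hinj
    have : 0 < Nat.card H := Nat.card_pos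
    omega
  refine ⟨hker, MonoidHom.range_eq_top.mp (Subgroup.eq_top_of_card_eq _ ?_)⟩
  rw [← Nat.card_congr (QuotientGroup.quotientKerEquivRange _).toEquiv, hker, hquot]

section SignedPerm

variable {ι K : Type*} [DecidableEq ι] [CommRing K]

theorem Pi.eq_and_eq_of_single_eq_single {M : Type*} [Zero M] {p r : ι} {a b : M}
    (ha : a ≠ 0) (h : (Pi.single p a : ι → M) = Pi.single r b) : p = r ∧ a = b := by
  have hp := congrFun h p
  by_cases hpr : p = r
  · subst hpr
    simpa using hp
  · simp [hpr] at hp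
    exact absurd hp ha

theorem LinearEquiv.apply_single_of_apply_single_one {g : (ι → K) ≃ₗ[K] (ι → K)} {i j : ι}
    {a : K} (h : g (Pi.single i 1) = Pi.single j a) (c : K) :
    g (Pi.single i c) = Pi.single j (c * a) := by
  have hc : (Pi.single i c : ι → K) = c • Pi.single i 1 := by
    rw [← Pi.single_smul', smul_eq_mul, mul_one]
  rw [hc, map_smul, h, ← Pi.single_smul', smul_eq_mul]

structure IsSignedPerm (g : (ι → K) ≃ₗ[K] (ι → K)) (σ : Perm ι) (s : ι → K) : Prop where
  sign_eq : ∀ i, s i = 1 ∨ s i = -1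
  apply_single_one : ∀ i, g (Pi.single i 1) = Pi.single (σ i) (s i)

namespace IsSignedPerm

variable {g h : (ι → K) ≃ₗ[K] (ι → K)} {σ τ : Perm ι} {s t : ι → K}

theorem sign_mul_self (hg : IsSignedPerm g σ s) (i : ι) : s i * s i = 1 := by
  rcases hg.sign_eq i with h | h <;> simp [h]

theorem sign_ne_zero [Nontrivial K] (hg : IsSignedPerm g σ s) (i : ι) : s i ≠ 0 :=
  left_ne_zero_of_mul_eq_one (hg.sign_mul_self i)

theorem apply_single (hg : IsSignedPerm g σ s) (i : ι) (c : K) :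
    g (Pi.single i c) = Pi.single (σ i) (c * s i) :=
  LinearEquiv.apply_single_of_apply_single_one (hg.apply_single_one i) c

theorem unique [Nontrivial K] (hg : IsSignedPerm g σ s) (hg' : IsSignedPerm g τ t) :
    σ = τ ∧ s = t := by
  have h i := Pi.eq_and_eq_of_single_eq_single (hg.sign_ne_zero i)
    ((hg.apply_single_one i).symm.trans (hg'.apply_single_one i))
  exact ⟨Equiv.ext fun i => (h i).1, funext fun i => (h i).2⟩

theorem eq [Finite ι] (hg : IsSignedPerm g σ s) (hh : IsSignedPerm h σ s) : g = h :=
  LinearEquiv.toLinearMap_injective <| LinearMap.pi_ext fun i c => by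
    simp only [LinearEquiv.coe_coe, hg.apply_single, hh.apply_single]

theorem one : IsSignedPerm (1 : (ι → K) ≃ₗ[K] (ι → K)) 1 1 :=
  ⟨fun _ => Or.inl rfl, fun _ => rfl⟩

theorem mul (hg : IsSignedPerm g σ s) (hh : IsSignedPerm h τ t) :
    IsSignedPerm (g * h) (σ * τ) (fun i => t i * s (τ i)) where
  sign_eq i := by
    rcases hh.sign_eq i with h1 | h1 <;> rcases hg.sign_eq (τ i) with h2 | h2 <;> simp [h1, h2]
  apply_single_one i := by
    rw [LinearEquiv.mul_apply, hh.apply_single_one, hg.apply_single]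
    rfl

theorem inv (hg : IsSignedPerm g σ s) : IsSignedPerm g⁻¹ σ⁻¹ (fun i => s (σ⁻¹ i)) where
  sign_eq i := hg.sign_eq _
  apply_single_one i := by
    apply g.injective
    rw [← LinearEquiv.mul_apply, mul_inv_cancel, hg.apply_single, hg.sign_mul_self]
    simp

theorem det [Fintype ι] (hg : IsSignedPerm g σ s) :
    LinearMap.det (g : (ι → K) →ₗ[K] (ι → K)) = Perm.sign σ * ∏ i, s i := by
  have hmat : LinearMap.toMatrix' (g : (ι → K) →ₗ[K] (ι → K)) =
      (Matrix.diagonal s).submatrix ⇑σ⁻¹ id := by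
    ext i j
    rw [LinearMap.toMatrix'_apply, LinearEquiv.coe_coe, hg.apply_single_one,
      Matrix.submatrix_apply, Matrix.diagonal_apply, id, Pi.single_apply]
    by_cases hij : i = σ j
    · simp [hij]
    · rw [if_neg hij, if_neg (by rwa [Perm.inv_eq_iff_eq])]
  rw [← LinearMap.det_toMatrix', hmat, Matrix.det_permute, Matrix.det_diagonal, Perm.sign_inv]

theorem sign_eq_of_commute [Nontrivial K] {z : (ι → K) ≃ₗ[K] (ι → K)} {r : ι → K} {i j : ι}
    (hz : IsSignedPerm z 1 r) (hg : IsSignedPerm g (swap i j) t) (hc : Commute g z) :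
    r i = r j := by
  have hgz := hg.mul hz
  rw [hc.eq] at hgz
  have h := congrFun (hgz.unique (hz.mul hg)).2 i
  simp only [Perm.one_apply, swap_apply_left] at h
  linear_combination t i * h + (r j - r i) * hg.sign_mul_self i

end IsSignedPerm

theorem exists_isSignedPerm [Finite ι] [Nontrivial K] {g : (ι → K) ≃ₗ[K] (ι → K)}
    (hg : ∀ i, ∃ j, g (Pi.single i 1) = Pi.single j 1 ∨ g (Pi.single i 1) = -Pi.single j 1) :
    ∃ σ s, IsSignedPerm g σ s := by
  have hg' i : ∃ j s, (s = 1 ∨ s = -1) ∧ g (Pi.single i 1) = Pi.single j s := by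
    obtain ⟨j, h | h⟩ := hg i
    · exact ⟨j, 1, Or.inl rfl, h⟩
    · exact ⟨j, -1, Or.inr rfl, by rw [h, Pi.single_neg]⟩
  choose f s hs hgs using hg'
  have hf : Injective f := by
    intro i i' hii'
    have h : g (Pi.single i (s i')) = g (Pi.single i' (s i)) := by
      rw [LinearEquiv.apply_single_of_apply_single_one (hgs i),
        LinearEquiv.apply_single_of_apply_single_one (hgs i'), hii', mul_comm]
    exact (Pi.eq_and_eq_of_single_eq_single (by rcases hs i' with h | h <;> simp [h])
      (g.injective h)).1
  exact ⟨Equiv.ofBijective f hf.bijective_of_finite, s, hs, hgs⟩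

end SignedPerm

section SignedPermGroup

variable (ι K : Type*) [DecidableEq ι] [CommRing K]

def signedPermGroup : Subgroup ((ι → K) ≃ₗ[K] (ι → K)) where
  carrier := {g | ∃ σ s, IsSignedPerm g σ s}
  mul_mem' := fun ⟨_, _, hg⟩ ⟨_, _, hh⟩ => ⟨_, _, hg.mul hh⟩
  one_mem' := ⟨1, 1, .one⟩
  inv_mem' := fun ⟨_, _, hg⟩ => ⟨_, _, hg.inv⟩

noncomputable def permHom [Nontrivial K] : signedPermGroup ι K →* Perm ι where
  toFun g := g.2.choose
  map_one' := (Exists.choose_spec (1 : signedPermGroup ι K).2).choose_spec.unique .one |>.1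
  map_mul' g h :=
    ((g * h).2.choose_spec.choose_spec.unique
      (g.2.choose_spec.choose_spec.mul h.2.choose_spec.choose_spec)).1

variable {ι K} [Nontrivial K]

theorem exists_isSignedPerm_permHom (g : signedPermGroup ι K) :
    ∃ s, IsSignedPerm (g : (ι → K) ≃ₗ[K] (ι → K)) (permHom ι K g) s :=
  g.2.choose_spec

theorem permHom_eq {g : signedPermGroup ι K} {σ : Perm ι} {s : ι → K}
    (hg : IsSignedPerm (g : (ι → K) ≃ₗ[K] (ι → K)) σ s) : permHom ι K g = σ :=
  ((exists_isSignedPerm_permHom g).choose_spec.unique hg).1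

instance [Finite ι] : IsMulCommutative (permHom ι K).ker := by
  refine .of_setLike_mul_comm fun x hx y hy => Subtype.ext ?_
  obtain ⟨s, hs⟩ := exists_isSignedPerm_permHom x
  obtain ⟨t, ht⟩ := exists_isSignedPerm_permHom y
  rw [MonoidHom.mem_ker.mp hx] at hs
  rw [MonoidHom.mem_ker.mp hy] at ht
  have hxy := hs.mul ht
  have hyx := ht.mul hs
  simp only [Perm.one_apply, mul_comm (t _)] at hxy hyx
  exact hxy.eq hyx

end SignedPermGroup

section Representation

variable {ι K S : Type*} [DecidableEq ι] [CommRing K] [Nontrivial K] [Group S]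
  {ρ : S →* signedPermGroup ι K}

theorem isMulCommutative_ker_permHom_comp [Finite ι] (hρ : Injective ρ) :
    IsMulCommutative ((permHom ι K).comp ρ).ker := by
  rw [← MonoidHom.comap_ker]
  exact Subgroup.comap_injective_isMulCommutative _ hρ

variable (hdiag : ∀ z r, IsSignedPerm (ρ z : (ι → K) ≃ₗ[K] (ι → K)) 1 r → ∀ i j, r i = r j)
include hdiag

theorem sign_mul_sign_eq_of_isSignedPerm {x y : S} {σ : Perm ι} {s t : ι → K}
    (hx : IsSignedPerm (ρ x : (ι → K) ≃ₗ[K] (ι → K)) σ s)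
    (hy : IsSignedPerm (ρ y : (ι → K) ≃ₗ[K] (ι → K)) σ t) (i j : ι) :
    s i * t i = s j * t j := by
  -- `y⁻¹ * x` lies over the identity, so its signs `r` are constant, and `s = r * t`.
  obtain ⟨r, hr⟩ := exists_isSignedPerm_permHom (ρ (y⁻¹ * x))
  have hperm : permHom ι K (ρ (y⁻¹ * x)) = 1 := by
    rw [map_mul, map_mul, map_inv, map_inv, permHom_eq hx, permHom_eq hy, inv_mul_cancel]
  rw [hperm] at hr
  have hyr := hy.mul hr
  rw [← Subgroup.coe_mul, ← map_mul, mul_inv_cancel_left, mul_one] at hyr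
  have hs := (hx.unique hyr).2
  simp only [hs, Perm.one_apply, mul_assoc, hy.sign_mul_self, mul_one]
  exact hdiag _ _ hr i j

theorem sign_mul_sign_eq_one_of_swap {x : S} {a b j : ι} {s : ι → K}
    (hx : IsSignedPerm (ρ x : (ι → K) ≃ₗ[K] (ι → K)) (swap a b) s) (hja : j ≠ a)
    (hjb : j ≠ b) : s a * s b = 1 := by
  have hxx := hx.mul hx
  rw [swap_mul_self, ← Subgroup.coe_mul, ← map_mul] at hxx
  have h1 : IsSignedPerm (ρ 1 : (ι → K) ≃ₗ[K] (ι → K)) 1 1 := by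
    rw [map_one]
    exact .one
  have h := sign_mul_sign_eq_of_isSignedPerm hdiag hxx h1 a j
  simpa only [swap_apply_left, swap_apply_of_ne_of_ne hja hjb, Pi.one_apply, mul_one,
    hx.sign_mul_self] using h

theorem sign_eq_sign_of_swap {x y : S} {a b c d k : ι} {s t : ι → K}
    (hx : IsSignedPerm (ρ x : (ι → K) ≃ₗ[K] (ι → K)) (swap a b) s)
    (hy : IsSignedPerm (ρ y : (ι → K) ≃ₗ[K] (ι → K)) (swap c d) t)
    (hnodup : [a, b, c, d, k].Nodup) : s c = s d := by
  simp only [List.nodup_cons, List.mem_cons, List.not_mem_nil, List.nodup_nil, or_false,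
    not_or] at hnodup
  obtain ⟨⟨hab, hac, had, hak⟩, ⟨hbc, hbd, hbk⟩, ⟨hcd, hck⟩, hdk, -⟩ := hnodup
  -- Disjoint swaps commute, so `x * y` and `y * x` lie over the same permutation; compare
  -- their signs at `c` and at the common fixed point `k`.
  have hxy := hx.mul hy
  have hyx := hy.mul hx
  rw [← Subgroup.coe_mul, ← map_mul] at hxy hyx
  rw [(Perm.disjoint_swap_swap (by simp [*])).commute.eq] at hxy
  have h := sign_mul_sign_eq_of_isSignedPerm hdiag hxy hyx c k
  simp only [swap_apply_left, swap_apply_of_ne_of_ne (Ne.symm hac) (Ne.symm hbc),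
    swap_apply_of_ne_of_ne (Ne.symm hck) (Ne.symm hdk),
    swap_apply_of_ne_of_ne (Ne.symm hak) (Ne.symm hbk)] at h
  have hcd' : s c * s d = 1 := by
    linear_combination h - s c * s d * hy.sign_mul_self c + s k * s k * hy.sign_mul_self k +
      hx.sign_mul_self k
  linear_combination s d * hcd' - s c * hx.sign_mul_self d

theorem false_of_surjective_permHom_comp [Fintype ι] [NeZero (2 : K)] (h5 : 5 ≤ Nat.card ι)
    (heven : Even (Nat.card ι))
    (hdet : ∀ x, LinearMap.det ((ρ x : (ι → K) ≃ₗ[K] (ι → K)) : (ι → K) →ₗ[K] (ι → K)) = 1)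
    (hsurj : Surjective ((permHom ι K).comp ρ)) : False := by
  have hfresh (u : Finset ι) (hu : u.card ≤ 4) : ∃ j, j ∉ u :=
    Finset.exists_notMem_of_card_lt (hu.trans_lt h5)
  have hlift σ : ∃ x s, IsSignedPerm (ρ x : (ι → K) ≃ₗ[K] (ι → K)) σ s := by
    obtain ⟨x, hx⟩ := hsurj σ
    exact ⟨x, hx ▸ exists_isSignedPerm_permHom (ρ x)⟩
  obtain ⟨a, -⟩ := hfresh ∅ (by simp)
  obtain ⟨b, hb⟩ := hfresh {a} (by simp)
  obtain ⟨j, hj⟩ := hfresh {a, b} (Finset.card_le_two.trans (by norm_num))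
  obtain ⟨x, s, hx⟩ := hlift (swap a b)
  simp only [Finset.mem_insert, Finset.mem_singleton, not_or] at hb hj
  have hrest c (hca : c ≠ a) (hcb : c ≠ b) : s c = s j := by
    rcases eq_or_ne c j with rfl | hcj
    · rfl
    obtain ⟨k, hk⟩ := hfresh {a, b, c, j} Finset.card_le_four
    obtain ⟨y, t, hy⟩ := hlift (swap c j)
    refine sign_eq_sign_of_swap hdiag hx hy (k := k) ?_
    simp_all [eq_comm]
  have hprod : ∏ i, s i = 1 :=
    Finset.prod_eq_one_of_pair_mul_eq_one_of_eq_on_compl heven (Ne.symm hb)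
      (sign_mul_sign_eq_one_of_swap hdiag hx hj.1 hj.2) hrest (hx.sign_mul_self j)
  have hdetx := hx.det
  rw [hdet x, hprod, Perm.sign_swap (Ne.symm hb)] at hdetx
  push_cast at hdetx
  exact two_ne_zero (by linear_combination hdetx : (2 : K) = 0)

end Representation

section Extensions

variable {ι K S : Type*} [Fintype ι] [DecidableEq ι] [CommRing K] [NeZero (2 : K)] [Group S]
  {ρ : S →* signedPermGroup ι K} (hρ : Injective ρ) (h5 : 5 ≤ Nat.card ι)
  (heven : Even (Nat.card ι))
  (hdet : ∀ x, LinearMap.det ((ρ x : (ι → K) ≃ₗ[K] (ι → K)) : (ι → K) →ₗ[K] (ι → K)) = 1)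
include hρ h5 heven hdet

theorem false_of_mulEquiv_perm (ψ : S ≃* Perm ι) : False := by
  have := NeZero.nontrivial (2 : K)
  have := isMulCommutative_ker_permHom_comp hρ
  have hker : ((permHom ι K).comp ρ).ker ≤ ψ.toMonoidHom.ker :=
    Subgroup.le_ker_of_isMulCommutative h5 _ ψ.surjective
  have hinj : Injective ((permHom ι K).comp ρ) := by
    rw [← MonoidHom.ker_eq_bot_iff, eq_bot_iff]
    exact hker.trans (MonoidHom.ker_eq_bot_iff _ |>.mpr ψ.injective).le
  refine false_of_surjective_permHom_comp ?_ h5 heven hdet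
    (hinj.bijective_of_nat_card_le (Nat.card_congr ψ.toEquiv).ge).2
  intro z r hz i j
  obtain rfl : z = 1 := hinj (by rw [map_one]; exact permHom_eq hz)
  rw [map_one, OneMemClass.coe_one] at hz
  rw [(hz.unique .one).2]
  rfl

theorem false_of_centralExtension_perm (π : S →* Perm ι) (hπ : Surjective π)
    (hcent : π.ker ≤ Subgroup.center S) (hcard : Nat.card π.ker = 2) : False := by
  have := NeZero.nontrivial (2 : K)
  have := isMulCommutative_ker_permHom_comp hρ
  obtain ⟨hker, hsurj⟩ := MonoidHom.ker_eq_and_surjective_of_ker_le_of_card_ker_eq_two hπ hcard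
    (Subgroup.le_ker_of_isMulCommutative h5 ((permHom ι K).comp ρ).ker hπ)
  refine false_of_surjective_permHom_comp ?_ h5 heven hdet hsurj
  intro z r hz i j
  rcases eq_or_ne i j with rfl | hij
  · rfl
  have hzc : z ∈ Subgroup.center S := hcent (hker ▸ permHom_eq hz)
  obtain ⟨g, hg⟩ := hsurj (swap i j)
  obtain ⟨t, ht⟩ := exists_isSignedPerm_permHom (ρ g)
  rw [← MonoidHom.comp_apply, hg] at ht
  have hgz : Commute g z := Subgroup.mem_center_iff.mp hzc g
  exact hz.sign_eq_of_commute ht ((hgz.map ρ).map (signedPermGroup ι K).subtype)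

end Extensions

theorem le_signedPermGroup_of_subset_J1 {S : Subgroup ((Fin 16 → ℂ) ≃ₗ[ℂ] (Fin 16 → ℂ))}
    (hS : (S : Set ((Fin 16 → ℂ) ≃ₗ[ℂ] (Fin 16 → ℂ))) ⊆ J1) :
    S ≤ signedPermGroup (Fin 16) ℂ := by
  intro g hg
  refine exists_isSignedPerm fun i => ?_
  have hi : g (Pi.single i 1) ∈ doubleBasis :=
    (hS hg).1 ▸ Set.mem_image_of_mem g ⟨i, Or.inl rfl⟩
  exact hi

/-- `J₁` contains no subgroup isomorphic to `Sym₁₆`, and no subgroup `S` with a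
central subgroup `Z ≤ Z(S)` of order `2` such that `S/Z ≅ Sym₁₆` (the latter
expressed via a surjective homomorphism `π : S → Sym₁₆` whose kernel is central
of order `2`). -/
theorem no_sym16_and_no_central_ext_of_sym16_in_J1 :
    (¬ ∃ S : Subgroup ((Fin 16 → ℂ) ≃ₗ[ℂ] (Fin 16 → ℂ)),
        (S : Set ((Fin 16 → ℂ) ≃ₗ[ℂ] (Fin 16 → ℂ))) ⊆ J1 ∧
        Nonempty (S ≃* Equiv.Perm (Fin 16))) ∧
    (¬ ∃ S : Subgroup ((Fin 16 → ℂ) ≃ₗ[ℂ] (Fin 16 → ℂ)),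
        (S : Set ((Fin 16 → ℂ) ≃ₗ[ℂ] (Fin 16 → ℂ))) ⊆ J1 ∧
        ∃ π : S →* Equiv.Perm (Fin 16), Function.Surjective π ∧
          π.ker ≤ Subgroup.center S ∧ Nat.card π.ker = 2) := by
  have h5 : 5 ≤ Nat.card (Fin 16) := by simp
  have heven : Even (Nat.card (Fin 16)) := ⟨8, by simp⟩
  constructor
  · rintro ⟨S, hS, ⟨ψ⟩⟩
    exact false_of_mulEquiv_perm
      (Subgroup.inclusion_injective (le_signedPermGroup_of_subset_J1 hS)) h5 heven
      (fun x => (hS x.2).2) ψ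
  · rintro ⟨S, hS, π, hπ, hcent, hcard⟩
    exact false_of_centralExtension_perm
      (Subgroup.inclusion_injective (le_signedPermGroup_of_subset_J1 hS)) h5 heven
      (fun x => (hS x.2).2) π hπ hcent hcard
end
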